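/- arXiv:2103.00061 — 6 statements merged into one kernel-verified Lean document; each statement's English description precedes it below -/
import Mathlib

section
/- Let v(ρ) = v_max − ρ^γ with γ > 0 and v_max > 0. Let x₀,…,x_n solve the follow-the-leader system with strictly ordered initial positions. Then for all t ≥ 0, all n ∈ ℕ, and all i ∈ {0,…,n−1}, one has t·(v(R_{i+1}(t)) − v(R_i(t)))/(x_{i+1}(t) − x_i(t)) ≤ 1/(γ+1), equivalently, with f(ρ) := ρ·v(ρ), t·(f'(R_{i+1}(t)) − f'(R_i(t)))/(x_{i+1}(t) − x_i(t)) ≤ 1 (with the convention R_n(t) := 0). -/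
/-!
Write `a_i := R_i ^ γ` and `d_i := x_{i+1} - x_i`. The system gives `d_i' = a_i - a_{i+1}`, and
since `R_i = (1/n) / d_i` also `a_i' = -γ a_i d_i' / d_i`. The defect
`G_i := t (a_i - a_{i+1}) - d_i / (γ+1)` is negative at `t = 0` and satisfies
`G_i' = -(γ a_{i+1} + (γ+1) t a_{i+1}') / (γ+1) - γ a_i G_i / d_i`,
while `G_{i+1} ≤ 0` is exactly `γ a_{i+1} + (γ+1) t a_{i+1}' ≥ 0`. So, by downward induction
starting from the leader (`a_n = 0`), `G_i` is strictly decreasing wherever it is positive and can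
never become positive.
-/

open Set

theorem image_nonpos_of_deriv_right_neg_of_pos {f f' : ℝ → ℝ} {a b : ℝ}
    (hf : ContinuousOn f (Icc a b)) (hf' : ∀ x ∈ Ico a b, HasDerivWithinAt f (f' x) (Ici x) x)
    (ha : f a ≤ 0) (bound : ∀ x ∈ Ico a b, 0 < f x → f' x < 0) :
    ∀ ⦃x⦄, x ∈ Icc a b → f x ≤ 0 := by
  intro x hx
  refine le_of_forall_pos_le_add fun ε hε => ?_
  rw [zero_add]
  exact image_le_of_deriv_right_lt_deriv_boundary hf hf' (ha.trans hε.le)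
    (fun _ => hasDerivAt_const _ ε) (fun y hy hfy => bound y hy (hfy ▸ hε)) hx

theorem HasDerivWithinAt.const_div_rpow {d : ℝ → ℝ} {d' c γ t : ℝ} {s : Set ℝ}
    (h : HasDerivWithinAt d d' s t) (hc : c ≠ 0) (hd : d t ≠ 0) :
    HasDerivWithinAt (fun τ => (c / d τ) ^ γ) (-γ * (c / d t) ^ γ * d' / d t) s t := by
  have hcd : c / d t ≠ 0 := div_ne_zero hc hd
  convert ((hasDerivWithinAt_const t s c).div h hd).rpow_const (p := γ) (Or.inl hcd) using 1
  · rfl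
  rw [Pi.div_apply, Real.rpow_sub_one hcd]
  field_simp
  ring

theorem mul_sub_le_div_of_hasDerivWithinAt {γ : ℝ} (hγ : 0 < γ) {a b b' d : ℝ → ℝ}
    (ha : ∀ t ∈ Ici (0 : ℝ), 0 < a t) (hd : ∀ t ∈ Ici (0 : ℝ), 0 < d t)
    (ha' : ∀ t ∈ Ici (0 : ℝ), HasDerivWithinAt a (-γ * a t * (a t - b t) / d t) (Ici 0) t)
    (hb' : ∀ t ∈ Ici (0 : ℝ), HasDerivWithinAt b (b' t) (Ici 0) t)
    (hd' : ∀ t ∈ Ici (0 : ℝ), HasDerivWithinAt d (a t - b t) (Ici 0) t)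
    (hb : ∀ t ∈ Ici (0 : ℝ), 0 ≤ γ * b t + (γ + 1) * t * b' t) :
    ∀ t ∈ Ici (0 : ℝ), t * (a t - b t) ≤ d t / (γ + 1) := by
  intro T hT
  have hγ1 : 0 < γ + 1 := by linarith
  set G : ℝ → ℝ := fun t => t * (a t - b t) - d t / (γ + 1) with hG
  have hG' : ∀ t ∈ Ici (0 : ℝ), HasDerivWithinAt G
      (-((γ * b t + (γ + 1) * t * b' t) / (γ + 1)) - γ * a t * G t / d t) (Ici 0) t := by
    intro t ht
    refine (((hasDerivWithinAt_id t _).mul ((ha' t ht).sub (hb' t ht))).sub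
      ((hd' t ht).div_const _)).congr_deriv ?_
    have := (hd t ht).ne'
    simp only [hG, id, Pi.sub_apply]
    field_simp
    ring
  have hGT := image_nonpos_of_deriv_right_neg_of_pos (a := 0) (b := T)
    (fun t ht => (hG' t ht.1).continuousWithinAt.mono Icc_subset_Ici_self)
    (fun t ht => (hG' t ht.1).mono (Ici_subset_Ici.2 ht.1))
    (by have := hd 0 self_mem_Ici; simp only [hG]; linarith [div_pos this hγ1])
    (fun t ht hGt => by
      have hforcing := div_nonneg (hb t ht.1) hγ1.le
      have hdamping := div_pos (mul_pos (mul_pos hγ (ha t ht.1)) hGt) (hd t ht.1)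
      linarith)
    ⟨hT, le_rfl⟩
  simp only [hG] at hGT
  linarith

theorem nonneg_add_mul_of_mul_sub_le {γ a b d t : ℝ} (hγ : 0 < γ) (ha : 0 ≤ a) (hd : 0 < d)
    (h : t * (a - b) ≤ d / (γ + 1)) :
    0 ≤ γ * a + (γ + 1) * t * (-γ * a * (a - b) / d) := by
  have hscaled : γ * a / d * (t * (a - b)) * (γ + 1) ≤ γ * a :=
    calc γ * a / d * (t * (a - b)) * (γ + 1) ≤ γ * a / d * (d / (γ + 1)) * (γ + 1) := by gcongr
      _ = γ * a := by field_simp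
  linarith [show (γ + 1) * t * (-γ * a * (a - b) / d) = -(γ * a / d * (t * (a - b)) * (γ + 1)) by
    ring]

structure IsFollowTheLeader (vmax γ : ℝ) (v : ℝ → ℝ) (n : ℕ) (x R : ℕ → ℝ → ℝ) : Prop where
  v_eq : ∀ r, v r = vmax - r ^ γ
  R_eq : ∀ i t, R i t = if i < n then (1 / n) / (x (i + 1) t - x i t) else 0
  lt_succ : ∀ t ∈ Ici (0 : ℝ), ∀ i < n, x i t < x (i + 1) t
  hasDerivWithinAt : ∀ i < n, ∀ t ∈ Ici (0 : ℝ), HasDerivWithinAt (x i) (v (R i t)) (Ici 0) t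
  hasDerivWithinAt_leader : ∀ t ∈ Ici (0 : ℝ), HasDerivWithinAt (x n) vmax (Ici 0) t

namespace IsFollowTheLeader

variable {vmax γ : ℝ} {v : ℝ → ℝ} {n i : ℕ} {x R : ℕ → ℝ → ℝ} {t : ℝ}

theorem R_eq_of_lt (hS : IsFollowTheLeader vmax γ v n x R) (hi : i < n) (t : ℝ) :
    R i t = (1 / n) / (x (i + 1) t - x i t) := by
  rw [hS.R_eq, if_pos hi]

theorem rpow_R_eq_zero (hS : IsFollowTheLeader vmax γ v n x R) (hγ : 0 < γ) (hi : n ≤ i)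
    (t : ℝ) : R i t ^ γ = 0 := by
  rw [hS.R_eq, if_neg (not_lt.2 hi), Real.zero_rpow hγ.ne']

theorem gap_pos (hS : IsFollowTheLeader vmax γ v n x R) (hi : i < n) (ht : t ∈ Ici 0) :
    0 < x (i + 1) t - x i t :=
  sub_pos.2 (hS.lt_succ t ht i hi)

theorem rpow_R_pos (hS : IsFollowTheLeader vmax γ v n x R) (hi : i < n) (ht : t ∈ Ici 0) :
    0 < R i t ^ γ := by
  have hn : (0 : ℝ) < n := Nat.cast_pos.2 (by omega)
  rw [hS.R_eq_of_lt hi]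
  exact Real.rpow_pos_of_pos (div_pos (by positivity) (hS.gap_pos hi ht)) γ

theorem hasDerivWithinAt_of_le (hS : IsFollowTheLeader vmax γ v n x R) (hγ : 0 < γ)
    (hi : i ≤ n) (ht : t ∈ Ici 0) : HasDerivWithinAt (x i) (v (R i t)) (Ici 0) t := by
  rcases hi.lt_or_eq with hi | rfl
  · exact hS.hasDerivWithinAt i hi t ht
  · rw [hS.v_eq, hS.rpow_R_eq_zero hγ le_rfl, sub_zero]
    exact hS.hasDerivWithinAt_leader t ht

theorem hasDerivWithinAt_gap (hS : IsFollowTheLeader vmax γ v n x R) (hγ : 0 < γ)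
    (hi : i < n) (ht : t ∈ Ici 0) :
    HasDerivWithinAt (fun τ => x (i + 1) τ - x i τ) (R i t ^ γ - R (i + 1) t ^ γ) (Ici 0) t := by
  refine ((hS.hasDerivWithinAt_of_le hγ hi ht).sub
    (hS.hasDerivWithinAt_of_le hγ hi.le ht)).congr_deriv ?_
  rw [hS.v_eq, hS.v_eq]
  ring

-- At `i = n` both sides vanish, whatever the meaningless gap `x (n + 1) - x n` is.
theorem hasDerivWithinAt_rpow_R (hS : IsFollowTheLeader vmax γ v n x R) (hγ : 0 < γ)
    (hi : i ≤ n) (ht : t ∈ Ici 0) :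
    HasDerivWithinAt (fun τ => R i τ ^ γ)
      (-γ * R i t ^ γ * (R i t ^ γ - R (i + 1) t ^ γ) / (x (i + 1) t - x i t)) (Ici 0) t := by
  rcases hi.lt_or_eq with hi | rfl
  · have hn : (1 / n : ℝ) ≠ 0 := one_div_ne_zero (Nat.cast_ne_zero.2 (by omega))
    have h := (hS.hasDerivWithinAt_gap hγ hi ht).const_div_rpow (γ := γ) hn (hS.gap_pos hi ht).ne'
    simpa only [← hS.R_eq_of_lt hi] using h
  · simp only [hS.rpow_R_eq_zero hγ le_rfl, mul_zero, zero_mul, zero_div]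
    exact hasDerivWithinAt_const t _ 0

theorem mul_sub_rpow_R_le (hS : IsFollowTheLeader vmax γ v n x R) (hγ : 0 < γ) (hi : i < n)
    (hnext : ∀ t ∈ Ici (0 : ℝ), 0 ≤ γ * R (i + 1) t ^ γ + (γ + 1) * t *
      (-γ * R (i + 1) t ^ γ * (R (i + 1) t ^ γ - R (i + 2) t ^ γ) / (x (i + 2) t - x (i + 1) t))) :
    ∀ t ∈ Ici (0 : ℝ), t * (R i t ^ γ - R (i + 1) t ^ γ) ≤ (x (i + 1) t - x i t) / (γ + 1) :=
  mul_sub_le_div_of_hasDerivWithinAt hγ (fun _ ht => hS.rpow_R_pos hi ht)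
    (fun _ ht => hS.gap_pos hi ht) (fun _ ht => hS.hasDerivWithinAt_rpow_R hγ hi.le ht)
    (fun _ ht => hS.hasDerivWithinAt_rpow_R hγ hi ht) (fun _ ht => hS.hasDerivWithinAt_gap hγ hi ht)
    hnext

theorem nonneg_rpow_R_add_mul_deriv (hS : IsFollowTheLeader vmax γ v n x R) (hγ : 0 < γ)
    (hi : i ≤ n) : ∀ t ∈ Ici (0 : ℝ), 0 ≤ γ * R i t ^ γ + (γ + 1) * t *
      (-γ * R i t ^ γ * (R i t ^ γ - R (i + 1) t ^ γ) / (x (i + 1) t - x i t)) := by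
  induction hi using Nat.decreasingInduction with
  | self => intro t _; simp [hS.rpow_R_eq_zero hγ le_rfl]
  | of_succ k hk ih =>
    intro t ht
    exact nonneg_add_mul_of_mul_sub_le hγ (hS.rpow_R_pos hk ht).le (hS.gap_pos hk ht)
      (hS.mul_sub_rpow_R_le hγ hk ih t ht)

end IsFollowTheLeader

theorem improved_one_sided_lipschitz_general
    (vmax γ : ℝ) (hγ : 0 < γ)
    (v : ℝ → ℝ) (hvdef : ∀ r : ℝ, v r = vmax - r ^ γ)
    (n : ℕ) (x : ℕ → ℝ → ℝ)
    (R : ℕ → ℝ → ℝ)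
    -- R_i(t) = (1/n)/(x_{i+1}(t) - x_i(t)) for i < n, and R_n(t) = 0
    (hRdef : ∀ i t, R i t = if i < n then (1 / n) / (x (i + 1) t - x i t) else 0)
    -- strictly ordered particles
    (horder : ∀ t ∈ Set.Ici (0:ℝ), ∀ i < n, x i t < x (i + 1) t)
    -- follow-the-leader system
    (hode : ∀ i < n, ∀ t ∈ Set.Ici (0:ℝ),
      HasDerivWithinAt (x i) (v (R i t)) (Set.Ici 0) t)
    (hoden : ∀ t ∈ Set.Ici (0:ℝ), HasDerivWithinAt (x n) vmax (Set.Ici 0) t) :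
    ∀ t ∈ Set.Ici (0:ℝ), ∀ i < n,
      t * (v (R (i + 1) t) - v (R i t)) / (x (i + 1) t - x i t) ≤ 1 / (γ + 1) ∧
      t * ((vmax - (γ + 1) * R (i + 1) t ^ γ) - (vmax - (γ + 1) * R i t ^ γ)) /
          (x (i + 1) t - x i t) ≤ 1 := by
  have hS : IsFollowTheLeader vmax γ v n x R := ⟨hvdef, hRdef, horder, hode, hoden⟩
  intro t ht i hi
  have hγ1 : 0 < γ + 1 := by linarith
  have hgap := hS.gap_pos hi ht
  have hbound := hS.mul_sub_rpow_R_le hγ hi (hS.nonneg_rpow_R_add_mul_deriv hγ hi) t ht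
  rw [le_div_iff₀ hγ1] at hbound
  rw [hvdef, hvdef, div_le_div_iff₀ hgap hγ1, div_le_one hgap]
  constructor <;> linarith

/-- **Improved one-sided Lipschitz condition** (Theorem 2.5 of the paper).
For `v(ρ) = v_max - ρ^γ` with `γ > 0`, the follow-the-leader approximation satisfies,
for all `t ≥ 0` and all `i ∈ {0,…,n-1}`,
`t (v(R_{i+1}) - v(R_i)) / (x_{i+1} - x_i) ≤ 1/(γ+1)`, equivalently
`t (f'(R_{i+1}) - f'(R_i)) / (x_{i+1} - x_i) ≤ 1` where `f'(ρ) = v_max - (γ+1) ρ^γ`,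
with the convention `R_n(t) = 0`. -/
theorem improved_one_sided_lipschitz
    (vmax γ : ℝ) (hvmax : 0 < vmax) (hγ : 0 < γ)
    (v : ℝ → ℝ) (hvdef : ∀ r : ℝ, v r = vmax - r ^ γ)
    (n : ℕ) (hn : 0 < n) (x : ℕ → ℝ → ℝ)
    (R : ℕ → ℝ → ℝ)
    -- R_i(t) = (1/n)/(x_{i+1}(t) - x_i(t)) for i < n, and R_n(t) = 0
    (hRdef : ∀ i t, R i t = if i < n then (1 / n) / (x (i + 1) t - x i t) else 0)
    -- strictly ordered particles
    (horder : ∀ t ∈ Set.Ici (0:ℝ), ∀ i < n, x i t < x (i + 1) t)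
    -- follow-the-leader system
    (hode : ∀ i < n, ∀ t ∈ Set.Ici (0:ℝ),
      HasDerivWithinAt (x i) (v (R i t)) (Set.Ici 0) t)
    (hoden : ∀ t ∈ Set.Ici (0:ℝ), HasDerivWithinAt (x n) vmax (Set.Ici 0) t) :
    ∀ t ∈ Set.Ici (0:ℝ), ∀ i < n,
      t * (v (R (i + 1) t) - v (R i t)) / (x (i + 1) t - x i t) ≤ 1 / (γ + 1) ∧
      t * ((vmax - (γ + 1) * R (i + 1) t ^ γ) - (vmax - (γ + 1) * R i t ^ γ)) /
          (x (i + 1) t - x i t) ≤ 1 :=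
  improved_one_sided_lipschitz_general vmax γ hγ v hvdef n x R hRdef horder hode hoden
end

section
/- (Discrete maximum principle.) Let v be C¹ and non-increasing on [0,∞), and let x₀,…,x_n : [0,∞) → ℝ be a solution of the follow-the-leader system with x₀(0) < x₁(0) < … < x_n(0). Then for all t ≥ 0 and all k ∈ {0,…,n−1}, x_{k+1}(t) − x_k(t) ≥ min_{j=0,…,n−1} (x_{j+1}(0) − x_j(0)). In particular particles never collide and solutions exist globally in time. -/
open Set Filter Topology

/-!
Compare the gaps `x (j + 1) - x j` with the barrier `m * exp (-ε * t)`, where `m` is the smallest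
initial gap. At a time when all gaps lie above the barrier and the gap behind particle `i`
touches it, the gap ahead of particle `i + 1` is at least as large, so the antitone velocity law
makes particle `i + 1` no slower than particle `i`. That gap then grows strictly faster than the
decreasing barrier, so no gap can cross it; letting `ε → 0` gives the bound `m`.
-/

theorem HasDerivWithinAt.eventually_lt_of_pos {f : ℝ → ℝ} {f' x : ℝ}
    (hf : HasDerivWithinAt f f' (Ici x) x) (hf' : 0 < f') : ∀ᶠ z in 𝓝[>] x, f x < f z := by
  filter_upwards [(hasDerivWithinAt_iff_tendsto_slope' (lt_irrefl x)).1 hf.Ioi_of_Ici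
    (Ioi_mem_nhds hf'), self_mem_nhdsWithin] with z hslope hxz
  exact (slope_pos_iff_of_le hxz.le).1 hslope

theorem forall_nonneg_of_deriv_right_pos_of_eq_zero {ι : Type*} {s : Finset ι}
    {h h' : ι → ℝ → ℝ} {a b : ℝ}
    (hcont : ∀ i ∈ s, ContinuousOn (h i) (Icc a b))
    (hderiv : ∀ i ∈ s, ∀ t ∈ Ico a b, HasDerivWithinAt (h i) (h' i t) (Ici t) t)
    (ha : ∀ i ∈ s, 0 ≤ h i a)
    (hpos : ∀ t ∈ Ico a b, (∀ j ∈ s, 0 ≤ h j t) → ∀ i ∈ s, h i t = 0 → 0 < h' i t) :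
    ∀ t ∈ Icc a b, ∀ i ∈ s, 0 ≤ h i t := by
  set S := {t | ∀ i ∈ s, 0 ≤ h i t}
  have hclosed : IsClosed (S ∩ Icc a b) := by
    have hS : S ∩ Icc a b = Icc a b ∩ ⋂ i ∈ s, Icc a b ∩ h i ⁻¹' Ici 0 := by
      ext t
      aesop
    rw [hS]
    exact isClosed_Icc.inter <| isClosed_biInter fun i hi =>
      (hcont i hi).preimage_isClosed_of_isClosed isClosed_Icc isClosed_Ici
  refine fun t ht => hclosed.Icc_subset_of_forall_mem_nhdsWithin ha ?_ ht
  rintro t ⟨htS, ht⟩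
  refine (eventually_all_finset s).2 fun i hi => ?_
  rcases (htS i hi).eq_or_lt with hzero | hpos_i
  · filter_upwards [(hderiv i hi t ht).eventually_lt_of_pos (hpos t ht htS i hi hzero.symm)]
      with z hz
    exact (hzero.trans_lt hz).le
  · filter_upwards [((hderiv i hi t ht).continuousWithinAt.mono Ioi_subset_Ici_self).eventually
      (lt_mem_nhds hpos_i)] with z hz
    exact hz.le

noncomputable def ftlVelocity (v : ℝ → ℝ) (n : ℕ) (x : ℕ → ℝ → ℝ) (i : ℕ) (t : ℝ) : ℝ :=
  if i < n then v ((1 / n) / (x (i + 1) t - x i t)) else v 0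

section FollowTheLeader

variable {v : ℝ → ℝ} {n : ℕ} {x : ℕ → ℝ → ℝ}

theorem hasDerivWithinAt_ftlVelocity
    (hode : ∀ i < n, ∀ t ∈ Ici (0:ℝ),
      HasDerivWithinAt (x i) (v ((1 / n) / (x (i + 1) t - x i t))) (Ici 0) t)
    (hoden : ∀ t ∈ Ici (0:ℝ), HasDerivWithinAt (x n) (v 0) (Ici 0) t)
    {i : ℕ} (hi : i ≤ n) {t : ℝ} (ht : 0 ≤ t) :
    HasDerivWithinAt (x i) (ftlVelocity v n x i t) (Ici 0) t := by
  rcases hi.lt_or_eq with hi | rfl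
  · simpa [ftlVelocity, hi] using hode i hi t ht
  · simpa [ftlVelocity] using hoden t ht

theorem ftlVelocity_le_succ (hmono : AntitoneOn v (Ici 0)) {i : ℕ} (hi : i < n) {t : ℝ}
    (hgap : 0 < x (i + 1) t - x i t)
    (hnext : i + 1 < n → x (i + 1) t - x i t ≤ x (i + 2) t - x (i + 1) t) :
    ftlVelocity v n x i t ≤ ftlVelocity v n x (i + 1) t := by
  have hR : (0:ℝ) ≤ (1 / n) / (x (i + 1) t - x i t) := by positivity
  rw [ftlVelocity, if_pos hi, ftlVelocity]
  split_ifs with hi'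
  · have hgap' := hnext hi'
    exact hmono (div_nonneg (by positivity) (hgap.le.trans hgap')) hR
      (div_le_div_of_nonneg_left (by positivity) hgap hgap')
  · exact hmono self_mem_Ici hR hR

theorem mul_exp_le_gap (hmono : AntitoneOn v (Ici 0))
    (hode : ∀ i < n, ∀ t ∈ Ici (0:ℝ),
      HasDerivWithinAt (x i) (v ((1 / n) / (x (i + 1) t - x i t))) (Ici 0) t)
    (hoden : ∀ t ∈ Ici (0:ℝ), HasDerivWithinAt (x n) (v 0) (Ici 0) t)
    {m ε : ℝ} (hm : 0 < m) (hε : 0 < ε) (hm0 : ∀ j < n, m ≤ x (j + 1) 0 - x j 0)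
    {t : ℝ} (ht : 0 ≤ t) {k : ℕ} (hk : k < n) :
    m * Real.exp (-ε * t) ≤ x (k + 1) t - x k t := by
  set b : ℝ → ℝ := fun s => m * Real.exp (-ε * s)
  have hb_pos : ∀ s, 0 < b s := fun s => by positivity
  have hb : ∀ s, HasDerivAt b (-(ε * b s)) s := fun s =>
    (((hasDerivAt_id' s).const_mul (-ε)).exp.const_mul m).congr_deriv (by ring)
  have hderiv : ∀ i < n, ∀ s ≥ (0:ℝ), HasDerivWithinAt (fun s => x (i + 1) s - x i s - b s)
      (ftlVelocity v n x (i + 1) s - ftlVelocity v n x i s + ε * b s) (Ici 0) s := by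
    intro i hi s hs
    rw [← sub_neg_eq_add]
    exact ((hasDerivWithinAt_ftlVelocity hode hoden hi hs).sub
      (hasDerivWithinAt_ftlVelocity hode hoden hi.le hs)).sub (hb s).hasDerivWithinAt
  have hpos : ∀ s, (∀ j ∈ Finset.range n, 0 ≤ x (j + 1) s - x j s - b s) →
      ∀ i ∈ Finset.range n, x (i + 1) s - x i s - b s = 0 →
      0 < ftlVelocity v n x (i + 1) s - ftlVelocity v n x i s + ε * b s := by
    intro s hall i hi hzero
    have hnext : i + 1 < n → x (i + 1) s - x i s ≤ x (i + 2) s - x (i + 1) s := fun h => by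
      linarith [hall (i + 1) (Finset.mem_range.2 h)]
    have := ftlVelocity_le_succ hmono (Finset.mem_range.1 hi) (by linarith [hb_pos s]) hnext
    linarith [mul_pos hε (hb_pos s)]
  have key := forall_nonneg_of_deriv_right_pos_of_eq_zero (s := Finset.range n) (a := 0) (b := t)
    (fun i hi s hs => (hderiv i (Finset.mem_range.1 hi) s hs.1).continuousWithinAt.mono
      Icc_subset_Ici_self)
    (fun i hi s hs => (hderiv i (Finset.mem_range.1 hi) s hs.1).mono (Ici_subset_Ici.2 hs.1))
    (fun i hi => by simpa [b] using hm0 i (Finset.mem_range.1 hi))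
    (fun s _ => hpos s) t ⟨ht, le_rfl⟩ k (Finset.mem_range.2 hk)
  exact sub_nonneg.1 key

end FollowTheLeader

theorem discrete_maximum_principle_general
    (v : ℝ → ℝ)
    (hmono : AntitoneOn v (Set.Ici 0))
    (n : ℕ) (hn : 0 < n) (x : ℕ → ℝ → ℝ)
    -- follow-the-leader system: ẋ_i = v(R_i), R_i = (1/n)/(x_{i+1}-x_i), ẋ_n = v(0)
    (hode : ∀ i < n, ∀ t ∈ Set.Ici (0:ℝ),
      HasDerivWithinAt (x i) (v ((1 / n) / (x (i + 1) t - x i t))) (Set.Ici 0) t)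
    (hoden : ∀ t ∈ Set.Ici (0:ℝ), HasDerivWithinAt (x n) (v 0) (Set.Ici 0) t)
    -- strictly ordered initial positions
    (hinit : ∀ i < n, x i 0 < x (i + 1) 0) :
    ∀ t ∈ Set.Ici (0:ℝ), ∀ k < n,
      (Finset.range n).inf' (Finset.nonempty_range_iff.mpr hn.ne')
          (fun j => x (j + 1) 0 - x j 0)
        ≤ x (k + 1) t - x k t := by
  intro t ht k hk
  set m := (Finset.range n).inf' (Finset.nonempty_range_iff.mpr hn.ne')
    (fun j => x (j + 1) 0 - x j 0)
  have hm : 0 < m := (Finset.lt_inf'_iff _).2 fun j hj =>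
    sub_pos.2 (hinit j (Finset.mem_range.1 hj))
  have hm0 : ∀ j < n, m ≤ x (j + 1) 0 - x j 0 := fun j hj =>
    Finset.inf'_le _ (Finset.mem_range.2 hj)
  have hlim : Tendsto (fun ε => m * Real.exp (-ε * t)) (𝓝[>] 0) (𝓝 m) := by
    have : Continuous fun ε => m * Real.exp (-ε * t) := by fun_prop
    simpa using (this.tendsto 0).mono_left nhdsWithin_le_nhds
  exact le_of_tendsto hlim (eventually_nhdsWithin_of_forall fun ε hε =>
    mul_exp_le_gap hmono hode hoden hm hε hm0 ht hk)

/-- **Discrete maximum principle** for the follow-the-leader system (Proposition 4.1).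
If `v` is `C¹` and non-increasing on `[0,∞)` and the particles are initially strictly
ordered, then for all `t ≥ 0` the gap between consecutive particles is bounded from below
by the smallest initial gap; in particular particles never collide. -/
theorem discrete_maximum_principle
    (v : ℝ → ℝ)
    (hv : ContDiffOn ℝ 1 v (Set.Ici 0))
    (hmono : AntitoneOn v (Set.Ici 0))
    (n : ℕ) (hn : 0 < n) (x : ℕ → ℝ → ℝ)
    -- follow-the-leader system: ẋ_i = v(R_i), R_i = (1/n)/(x_{i+1}-x_i), ẋ_n = v(0)
    (hode : ∀ i < n, ∀ t ∈ Set.Ici (0:ℝ),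
      HasDerivWithinAt (x i) (v ((1 / n) / (x (i + 1) t - x i t))) (Set.Ici 0) t)
    (hoden : ∀ t ∈ Set.Ici (0:ℝ), HasDerivWithinAt (x n) (v 0) (Set.Ici 0) t)
    -- strictly ordered initial positions
    (hinit : ∀ i < n, x i 0 < x (i + 1) 0) :
    ∀ t ∈ Set.Ici (0:ℝ), ∀ k < n,
      (Finset.range n).inf' (Finset.nonempty_range_iff.mpr hn.ne')
          (fun j => x (j + 1) 0 - x j 0)
        ≤ x (k + 1) t - x k t :=
  discrete_maximum_principle_general v hmono n hn x hode hoden hinit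
end

section
/- (Wasserstein equi-continuity in time.) Assume (V1) and (I), and let ρⁿ be the discrete density of the follow-the-leader scheme with R_i(t) ∈ [0,R̄] for all i, t. Then for all s, t ≥ 0, W₁(ρⁿ(·,t), ρⁿ(·,s)) ≤ 2·max{v_max, |v(R̄)|}·|t − s|; in particular the constant is independent of n, s and t. -/
open MeasureTheory Set Filter Topology

/-- The discrete forward-difference density `R_i(t) = (1/n)/(x_{i+1}(t) - x_i(t))`. -/
noncomputable def Rden (n : ℕ) (x : ℕ → ℝ → ℝ) (i : ℕ) (t : ℝ) : ℝ :=
  (1 / n) / (x (i + 1) t - x i t)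

/-- The discrete (piecewise constant) density
`ρⁿ(y,t) = Σ_{i<n} R_i(t) · 1_{[x_i(t), x_{i+1}(t))}(y)`. -/
noncomputable def discDens (n : ℕ) (x : ℕ → ℝ → ℝ) (y t : ℝ) : ℝ :=
  ∑ i ∈ Finset.range n,
    Set.indicator (Set.Ico (x i t) (x (i + 1) t)) (fun _ => Rden n x i t) y

/-- The `1`-Wasserstein distance between two probability densities on `ℝ`, expressed
through the classical one-dimensional formula `W₁(f,g) = ‖F - G‖_{L¹(ℝ)}`, where `F, G`
are the cumulative distribution functions (this equals the `L¹(0,1)` distance of the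
pseudo-inverses of the CDFs). -/
noncomputable def W1 (f g : ℝ → ℝ) : ℝ :=
  ∫ y : ℝ, |(∫ u in Set.Iic y, f u) - (∫ u in Set.Iic y, g u)|

/-- Atomisation of the initial datum `rb` into `n` particles of mass `1/n`. -/
def Atomised (rb : ℝ → ℝ) (n : ℕ) (x : ℕ → ℝ → ℝ) : Prop :=
  x 0 0 = sInf (tsupport rb) ∧ x n 0 = sSup (tsupport rb) ∧
  ∀ i : ℕ, 1 ≤ i → i ≤ n - 1 →
    x i 0 = sSup {y : ℝ | (∫ s in (x (i - 1) 0)..y, rb s) < 1 / n}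

/-!
The CDF of `ρⁿ(·,t)` is the average over the cells `[x_i(t), x_{i+1}(t))` of the CDFs of
the uniform distributions on them. The CDF of the uniform distribution is antitone in both
endpoints, so two of them are sandwiched between the CDFs with endpoints `min` and `max`, whose
difference integrates to the difference of the means: hence the L¹ distance of two uniform CDFs
is at most half the sum of the endpoint displacements. Finally every particle moves with speed at
most `max{v_max, |v(R̄)|}` because `v` is decreasing on `[0, R̄]`.
-/

noncomputable def uniformCDF (a b y : ℝ) : ℝ := max 0 (min 1 ((y - a) / (b - a)))

section UniformCDF

variable {a b a' b' y : ℝ}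

theorem continuous_uniformCDF (a b : ℝ) : Continuous (uniformCDF a b) := by
  unfold uniformCDF
  fun_prop

theorem uniformCDF_nonneg (a b y : ℝ) : 0 ≤ uniformCDF a b y := le_max_left _ _

theorem uniformCDF_le_one (a b y : ℝ) : uniformCDF a b y ≤ 1 :=
  max_le zero_le_one (min_le_left _ _)

theorem uniformCDF_of_le_left (hab : a < b) (h : y ≤ a) : uniformCDF a b y = 0 :=
  max_eq_left <| (min_le_right _ _).trans <| div_nonpos_of_nonpos_of_nonneg (by linarith) (by linarith)

theorem uniformCDF_of_right_le (hab : a < b) (h : b ≤ y) : uniformCDF a b y = 1 := by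
  rw [uniformCDF, min_eq_left ((one_le_div (by linarith)).2 (by linarith)),
    max_eq_right zero_le_one]

theorem uniformCDF_of_mem_Icc (hab : a < b) (hy : y ∈ Icc a b) :
    uniformCDF a b y = (y - a) / (b - a) := by
  rw [uniformCDF, min_eq_right ((div_le_one (by linarith)).2 (by linarith [hy.2])),
    max_eq_right (div_nonneg (by linarith [hy.1]) (by linarith))]

theorem uniformCDF_le_uniformCDF (ha : a ≤ a') (hb : b ≤ b') (hab : a < b) (hab' : a' < b')
    (y : ℝ) : uniformCDF a' b' y ≤ uniformCDF a b y := by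
  rcases le_or_gt y a' with h | h
  · rw [uniformCDF_of_le_left hab' h]; exact uniformCDF_nonneg _ _ _
  rcases le_or_gt b y with h' | h'
  · rw [uniformCDF_of_right_le hab h']; exact uniformCDF_le_one _ _ _
  rw [uniformCDF_of_mem_Icc hab ⟨ha.trans h.le, h'.le⟩,
    uniformCDF_of_mem_Icc hab' ⟨h.le, h'.le.trans hb⟩,
    div_le_div_iff₀ (by linarith) (by linarith)]
  nlinarith [mul_nonneg (sub_nonneg.2 h'.le) (sub_nonneg.2 ha),
    mul_nonneg (sub_nonneg.2 h.le) (sub_nonneg.2 hb),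
    mul_nonneg (sub_nonneg.2 ha) (sub_nonneg.2 hb)]

theorem intervalIntegral_uniformCDF {c d : ℝ} (hab : a < b) (hc : c ≤ a) (hd : b ≤ d) :
    ∫ y in c..d, uniformCDF a b y = (b - a) / 2 + (d - b) := by
  have hi : ∀ p q : ℝ, IntervalIntegrable (uniformCDF a b) volume p q :=
    fun p q => (continuous_uniformCDF a b).intervalIntegrable p q
  rw [← intervalIntegral.integral_add_adjacent_intervals (hi c a) (hi a d),
    ← intervalIntegral.integral_add_adjacent_intervals (hi a b) (hi b d)]
  have left : ∫ y in c..a, uniformCDF a b y = 0 := by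
    rw [intervalIntegral.integral_congr (g := fun _ => 0)
      fun y hy => uniformCDF_of_le_left hab (uIcc_of_le hc ▸ hy).2]
    simp
  have middle : ∫ y in a..b, uniformCDF a b y = (b - a) / 2 := by
    rw [intervalIntegral.integral_congr (g := fun y => (y - a) / (b - a))
      fun y hy => uniformCDF_of_mem_Icc hab (uIcc_of_le hab.le ▸ hy),
      intervalIntegral.integral_div, intervalIntegral.integral_sub
        intervalIntegral.intervalIntegrable_id intervalIntegrable_const,
      integral_id, intervalIntegral.integral_const, smul_eq_mul,
      div_eq_iff (sub_ne_zero.2 hab.ne')]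
    ring
  have right : ∫ y in b..d, uniformCDF a b y = d - b := by
    rw [intervalIntegral.integral_congr (g := fun _ => 1)
      fun y hy => uniformCDF_of_right_le hab (uIcc_of_le hd ▸ hy).1]
    simp
  rw [left, middle, right]
  ring

theorem uniformCDF_sub_uniformCDF_eq_zero (hab : a < b) (hab' : a' < b') (y : ℝ)
    (hy : y ∉ Icc (min a a') (max b b')) : uniformCDF a b y - uniformCDF a' b' y = 0 := by
  rcases not_and_or.1 hy with h | h <;> push Not at h
  · rw [uniformCDF_of_le_left hab (h.le.trans (min_le_left _ _)),
      uniformCDF_of_le_left hab' (h.le.trans (min_le_right _ _)), sub_self]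
  · rw [uniformCDF_of_right_le hab ((le_max_left _ _).trans h.le),
      uniformCDF_of_right_le hab' ((le_max_right _ _).trans h.le), sub_self]

theorem integrable_uniformCDF_sub_uniformCDF (hab : a < b) (hab' : a' < b') :
    Integrable fun y => uniformCDF a b y - uniformCDF a' b' y :=
  ((continuous_uniformCDF a b).sub (continuous_uniformCDF a' b')).integrable_of_hasCompactSupport
    (HasCompactSupport.intro isCompact_Icc (uniformCDF_sub_uniformCDF_eq_zero hab hab'))

theorem integral_uniformCDF_sub_uniformCDF (ha : a ≤ a') (hb : b ≤ b') (hab : a < b)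
    (hab' : a' < b') :
    ∫ y, (uniformCDF a b y - uniformCDF a' b' y) = (a' - a) / 2 + (b' - b) / 2 := by
  have hle : a ≤ b' := ha.trans hab'.le
  rw [← setIntegral_eq_integral_of_forall_compl_eq_zero
      (uniformCDF_sub_uniformCDF_eq_zero hab hab'), min_eq_left ha, max_eq_right hb,
    integral_Icc_eq_integral_Ioc, ← intervalIntegral.integral_of_le hle,
    intervalIntegral.integral_sub ((continuous_uniformCDF a b).intervalIntegrable _ _)
      ((continuous_uniformCDF a' b').intervalIntegrable _ _),
    intervalIntegral_uniformCDF hab le_rfl hb, intervalIntegral_uniformCDF hab' ha le_rfl]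
  ring

theorem integral_abs_uniformCDF_sub_le (hab : a < b) (hab' : a' < b') :
    ∫ y, |uniformCDF a b y - uniformCDF a' b' y| ≤ (|a - a'| + |b - b'|) / 2 := by
  have hlow : min a a' < min b b' := min_lt_min hab hab'
  have hup : max a a' < max b b' := max_lt_max hab hab'
  have sandwich : ∀ y, |uniformCDF a b y - uniformCDF a' b' y|
      ≤ uniformCDF (min a a') (min b b') y - uniformCDF (max a a') (max b b') y := by
    intro y
    have := uniformCDF_le_uniformCDF (min_le_left a a') (min_le_left b b') hlow hab y
    have := uniformCDF_le_uniformCDF (min_le_right a a') (min_le_right b b') hlow hab' y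
    have := uniformCDF_le_uniformCDF (le_max_left a a') (le_max_left b b') hab hup y
    have := uniformCDF_le_uniformCDF (le_max_right a a') (le_max_right b b') hab' hup y
    rw [abs_sub_le_iff]
    constructor <;> linarith
  calc ∫ y, |uniformCDF a b y - uniformCDF a' b' y|
      ≤ ∫ y, (uniformCDF (min a a') (min b b') y - uniformCDF (max a a') (max b b') y) :=
        integral_mono (integrable_uniformCDF_sub_uniformCDF hab hab').abs
          (integrable_uniformCDF_sub_uniformCDF hlow hup) sandwich
    _ = (max a a' - min a a') / 2 + (max b b' - min b b') / 2 :=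
        integral_uniformCDF_sub_uniformCDF min_le_max min_le_max hlow hup
    _ = (|a - a'| + |b - b'|) / 2 := by
        rw [max_sub_min_eq_abs', max_sub_min_eq_abs']
        ring

end UniformCDF

theorem volume_Iic_inter_Ico (a b y : ℝ) :
    volume (Iic y ∩ Ico a b) = ENNReal.ofReal (min y b - a) := by
  rcases lt_or_ge y b with h | h
  · have : Iic y ∩ Ico a b = Icc a y := by
      ext u
      simp only [mem_inter_iff, mem_Iic, mem_Ico, mem_Icc]
      exact ⟨fun ⟨h1, h2, _⟩ => ⟨h2, h1⟩, fun ⟨h1, h2⟩ => ⟨h2, h1, h2.trans_lt h⟩⟩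
    rw [this, Real.volume_Icc, min_eq_left h.le]
  · rw [inter_eq_right.2 fun u hu => hu.2.le.trans h, Real.volume_Ico, min_eq_right h]

theorem setIntegral_Iic_indicator_Ico {a b : ℝ} (hab : a < b) (c y : ℝ) :
    ∫ u in Iic y, (Ico a b).indicator (fun _ => c / (b - a)) u = c * uniformCDF a b y := by
  rw [setIntegral_indicator measurableSet_Ico, setIntegral_const, measureReal_def,
    volume_Iic_inter_Ico, ENNReal.toReal_ofReal', smul_eq_mul]
  rcases le_or_gt y a with h | h
  · rw [uniformCDF_of_le_left hab h, max_eq_right (by linarith [min_le_left y b])]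
    ring
  rcases le_or_gt y b with h' | h'
  · rw [min_eq_left h', uniformCDF_of_mem_Icc hab ⟨h.le, h'⟩, max_eq_left (by linarith)]
    ring
  · rw [min_eq_right h'.le, uniformCDF_of_right_le hab h'.le, max_eq_left (by linarith), mul_one,
      mul_div_cancel₀ c (sub_ne_zero.2 hab.ne')]

theorem setIntegral_Iic_discDens {n : ℕ} {x : ℕ → ℝ → ℝ} {t : ℝ}
    (hx : ∀ i < n, x i t < x (i + 1) t) (y : ℝ) :
    ∫ u in Iic y, discDens n x u t
      = ∑ i ∈ Finset.range n, (1 / n : ℝ) * uniformCDF (x i t) (x (i + 1) t) y := by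
  unfold discDens
  rw [integral_finsetSum _ fun i _ => Integrable.restrict <|
    (integrable_indicator_iff measurableSet_Ico).2 (integrableOn_const measure_Ico_lt_top.ne)]
  exact Finset.sum_congr rfl fun i hi =>
    setIntegral_Iic_indicator_Ico (hx i (Finset.mem_range.1 hi)) _ y

theorem W1_discDens_le_of_forall_abs_sub_le {n : ℕ} {x : ℕ → ℝ → ℝ} {s t δ : ℝ}
    (hxt : ∀ i < n, x i t < x (i + 1) t) (hxs : ∀ i < n, x i s < x (i + 1) s)
    (hδ : ∀ i ≤ n, |x i t - x i s| ≤ δ) :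
    W1 (fun y => discDens n x y t) (fun y => discDens n x y s) ≤ δ := by
  set F : ℕ → ℝ → ℝ := fun i y =>
    uniformCDF (x i t) (x (i + 1) t) y - uniformCDF (x i s) (x (i + 1) s) y
  have hF : ∀ i ∈ Finset.range n, Integrable (F i) := fun i hi =>
    integrable_uniformCDF_sub_uniformCDF (hxt i (Finset.mem_range.1 hi))
      (hxs i (Finset.mem_range.1 hi))
  have cell : ∀ i ∈ Finset.range n, ∫ y, |F i y| ≤ δ := fun i hi => by
    have hi := Finset.mem_range.1 hi
    linarith [integral_abs_uniformCDF_sub_le (hxt i hi) (hxs i hi), hδ i hi.le, hδ (i + 1) hi]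
  have hδ0 : 0 ≤ δ := (abs_nonneg _).trans (hδ 0 n.zero_le)
  have cdf_diff : ∀ y, (∫ u in Iic y, discDens n x u t) - (∫ u in Iic y, discDens n x u s)
      = ∑ i ∈ Finset.range n, (1 / n : ℝ) * F i y := fun y => by
    simp only [setIntegral_Iic_discDens hxt, setIntegral_Iic_discDens hxs, F, mul_sub,
      Finset.sum_sub_distrib]
  calc W1 (fun y => discDens n x y t) (fun y => discDens n x y s)
      = ∫ y, |∑ i ∈ Finset.range n, (1 / n : ℝ) * F i y| := by simp only [W1, cdf_diff]
    _ ≤ ∫ y, ∑ i ∈ Finset.range n, (1 / n : ℝ) * |F i y| := by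
        refine integral_mono (integrable_finsetSum _ fun i hi => (hF i hi).const_mul _).abs
          (integrable_finsetSum _ fun i hi => (hF i hi).abs.const_mul _) fun y => ?_
        refine (Finset.abs_sum_le_sum_abs _ _).trans_eq (Finset.sum_congr rfl fun i _ => ?_)
        rw [abs_mul, abs_of_nonneg (by positivity)]
    _ = ∑ i ∈ Finset.range n, (1 / n : ℝ) * ∫ y, |F i y| := by
        rw [integral_finsetSum _ fun i hi => (hF i hi).abs.const_mul _]
        simp only [integral_const_mul]
    _ ≤ ∑ i ∈ Finset.range n, (1 / n : ℝ) * δ :=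
        Finset.sum_le_sum fun i hi => mul_le_mul_of_nonneg_left (cell i hi) (by positivity)
    _ ≤ δ := by
        rw [Finset.sum_const, Finset.card_range, nsmul_eq_mul, ← mul_assoc, mul_one_div]
        exact mul_le_of_le_one_left hδ0 (div_self_le_one _)

theorem abs_le_max_of_antitoneOn {v : ℝ → ℝ} {R r : ℝ} (hv : AntitoneOn v (Icc 0 R))
    (hr : r ∈ Icc 0 R) : |v r| ≤ max (v 0) |v R| := by
  have hR : 0 ≤ R := hr.1.trans hr.2
  have below : v R ≤ v r := hv hr ⟨hR, le_rfl⟩ hr.2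
  have above : v r ≤ v 0 := hv ⟨le_rfl, hR⟩ hr hr.1
  exact abs_le.2 ⟨by linarith [neg_abs_le (v R), le_max_right (v 0) |v R|],
    above.trans (le_max_left _ _)⟩

theorem wasserstein_equicontinuity_general
    (Rb : ℝ)
    -- (V1)
    (v : ℝ → ℝ)
    (hanti : StrictAntiOn v (Set.Icc 0 Rb))
    -- follow-the-leader scheme
    (n : ℕ) (hn : 0 < n) (x : ℕ → ℝ → ℝ)
    (horder : ∀ t ∈ Set.Ici (0:ℝ), ∀ i < n, x i t < x (i + 1) t)
    (hrange : ∀ i < n, ∀ t ∈ Set.Ici (0:ℝ), Rden n x i t ∈ Set.Icc 0 Rb)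
    (hode : ∀ i < n, ∀ t ∈ Set.Ici (0:ℝ),
      HasDerivWithinAt (x i) (v (Rden n x i t)) (Set.Ici 0) t)
    (hoden : ∀ t ∈ Set.Ici (0:ℝ), HasDerivWithinAt (x n) (v 0) (Set.Ici 0) t) :
    ∀ s ∈ Set.Ici (0:ℝ), ∀ t ∈ Set.Ici (0:ℝ),
      W1 (fun y => discDens n x y t) (fun y => discDens n x y s) ≤
        2 * max (v 0) |v Rb| * |t - s| := by
  intro s hs t ht
  set L := max (v 0) |v Rb|
  have hRb : (0 : ℝ) ∈ Icc 0 Rb :=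
    ⟨le_rfl, (hrange 0 hn 0 self_mem_Ici).1.trans (hrange 0 hn 0 self_mem_Ici).2⟩
  have displacement : ∀ i ≤ n, |x i t - x i s| ≤ L * |t - s| := by
    intro i hi
    rcases hi.lt_or_eq with hi | rfl
    · exact (convex_Ici 0).norm_image_sub_le_of_norm_hasDerivWithin_le (hode i hi)
        (fun τ hτ => abs_le_max_of_antitoneOn hanti.antitoneOn (hrange i hi τ hτ)) hs ht
    · exact (convex_Ici 0).norm_image_sub_le_of_norm_hasDerivWithin_le hoden
        (fun _ _ => abs_le_max_of_antitoneOn hanti.antitoneOn hRb) hs ht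
  calc _ ≤ L * |t - s| :=
        W1_discDens_le_of_forall_abs_sub_le (horder t ht) (horder s hs) displacement
    _ ≤ 2 * L * |t - s| := by
        have : 0 ≤ L * |t - s| := (abs_nonneg _).trans (displacement 0 n.zero_le)
        linarith

/-- **Wasserstein equi-continuity in time** (Proposition 5.1 of the paper).
Under (V1) and (I), the discrete densities satisfy
`W₁(ρⁿ(·,t), ρⁿ(·,s)) ≤ 2 max{v_max, |v(R̄)|} |t - s|`, with a constant independent of
`n`, `s` and `t`. -/
theorem wasserstein_equicontinuity
    (rb : ℝ → ℝ) (Rb : ℝ)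
    -- (I)
    (hInt : MeasureTheory.Integrable rb)
    (hnn : ∀ y, 0 ≤ rb y)
    (hsupp : HasCompactSupport rb)
    (hmass : (∫ y : ℝ, rb y) = 1)
    (hmem : MeasureTheory.MemLp rb ⊤)
    (hRb : Rb = (MeasureTheory.eLpNorm rb ⊤ MeasureTheory.volume).toReal)
    -- (V1)
    (v vd : ℝ → ℝ)
    (hv1 : ∀ r ∈ Set.Icc (0:ℝ) Rb, HasDerivWithinAt v (vd r) (Set.Icc 0 Rb) r)
    (hv1c : ContinuousOn vd (Set.Icc 0 Rb))
    (hanti : StrictAntiOn v (Set.Icc 0 Rb))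
    -- follow-the-leader scheme
    (n : ℕ) (hn : 0 < n) (x : ℕ → ℝ → ℝ)
    (hatom : Atomised rb n x)
    (horder : ∀ t ∈ Set.Ici (0:ℝ), ∀ i < n, x i t < x (i + 1) t)
    (hrange : ∀ i < n, ∀ t ∈ Set.Ici (0:ℝ), Rden n x i t ∈ Set.Icc 0 Rb)
    (hode : ∀ i < n, ∀ t ∈ Set.Ici (0:ℝ),
      HasDerivWithinAt (x i) (v (Rden n x i t)) (Set.Ici 0) t)
    (hoden : ∀ t ∈ Set.Ici (0:ℝ), HasDerivWithinAt (x n) (v 0) (Set.Ici 0) t) :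
    ∀ s ∈ Set.Ici (0:ℝ), ∀ t ∈ Set.Ici (0:ℝ),
      W1 (fun y => discDens n x y t) (fun y => discDens n x y s) ≤
        2 * max (v 0) |v Rb| * |t - s| :=
  wasserstein_equicontinuity_general Rb v hanti n hn x horder hrange hode hoden
end

section
/- (From the v-condition to the extended entropy condition.) Assume v satisfies (V1) and (V2) on [0,R̄] with constant K, and let ρ : ℝ×(0,∞) → [0,R̄] be measurable. If v(ρ(x+z,t)) − v(ρ(x,t)) ≤ z/t for every z > 0 and almost every (x,t) ∈ ℝ×(0,∞), then f'(ρ(x+z,t)) − f'(ρ(x,t)) ≤ (1+K)·z/t for every z > 0 and almost every (x,t) ∈ ℝ×(0,∞), where f(ρ) := ρ·v(ρ). In particular ρ satisfies the extended one-sided Lipschitz condition f'(ρ)_x ≤ C/t with C = 1+K. -/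
open MeasureTheory Set Filter Topology Function

private lemma integrable_of_bound' {f : ℝ×ℝ → ℝ} {s : Set (ℝ×ℝ)} (hs : IsCompact s)
    (hm : AEStronglyMeasurable f volume) (h0 : ∀ p, p ∉ s → f p = 0)
    {c : ℝ} (hb : ∀ p, |f p| ≤ c) : Integrable f := by
  have hsm : MeasurableSet s := hs.isClosed.measurableSet
  have hint : Integrable (s.indicator fun _ => c) := by
    rw [integrable_indicator_iff hsm]
    exact integrableOn_const hs.measure_lt_top.ne
  refine hint.mono' hm (Eventually.of_forall fun p => ?_)
  by_cases hp : p ∈ s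
  · simpa [Set.indicator_of_mem hp] using hb p
  · simp [h0 p hp, Set.indicator_of_notMem hp]

private lemma iter_eq' {h : ℝ×ℝ → ℝ} (hint : Integrable h) (h0 : ∀ p : ℝ×ℝ, p.2 ≤ 0 → h p = 0) :
    ∫ t in Set.Ioi (0:ℝ), ∫ y, h (y, t) = ∫ p, h p := by
  have step1 : ∫ t in Set.Ioi (0:ℝ), ∫ y, h (y, t) = ∫ t : ℝ, ∫ y, h (y, t) := by
    refine setIntegral_eq_integral_of_forall_compl_eq_zero fun t ht => ?_
    have : ∀ y : ℝ, h (y, t) = 0 := fun y => h0 (y, t) (le_of_not_gt (by simpa using ht))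
    simp [this]
  have hswap : Integrable (uncurry fun t y => h (y, t)) ((volume : Measure ℝ).prod volume) := by
    have := (hint.mono_measure (le_of_eq (Measure.volume_eq_prod ℝ ℝ).symm)).swap
    exact this
  rw [step1, integral_integral_swap hswap]
  have : Integrable (uncurry fun y t => h (y, t)) ((volume : Measure ℝ).prod volume) := by
    exact hint.mono_measure (le_of_eq (Measure.volume_eq_prod ℝ ℝ).symm)
  rw [integral_integral this, ← Measure.volume_eq_prod]

/-- **From the `v`-condition to the extended entropy condition** (Proposition 5.9 of the
paper).  Under (V1) and (V2) with constant `K`, if a measurable `ρ` with values in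
`[0,R̄]` satisfies `v(ρ(x+z,t)) - v(ρ(x,t)) ≤ z/t` for every `z > 0` and almost every
`(x,t)`, then it satisfies `f'(ρ(x+z,t)) - f'(ρ(x,t)) ≤ (1+K) z/t` for every `z > 0` and
almost every `(x,t)`, where `f'(r) = v(r) + r v'(r)`; in particular `ρ` satisfies the
extended one-sided Lipschitz condition `f'(ρ)_x ≤ C/t` with `C = 1 + K`. -/
theorem v_condition_to_extended_entropy_condition
    (Rb : ℝ) (hRbpos : 0 < Rb) (v vd : ℝ → ℝ)
    -- (V1)
    (hv1 : ∀ r ∈ Set.Icc (0:ℝ) Rb, HasDerivWithinAt v (vd r) (Set.Icc 0 Rb) r)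
    (hv1c : ContinuousOn vd (Set.Icc 0 Rb))
    (hanti : StrictAntiOn v (Set.Icc 0 Rb))
    -- (V2) with constant K
    (K : ℝ) (hK : 0 ≤ K)
    (hv2 : ∀ r ∈ Set.Icc (0:ℝ) Rb, ∀ s ∈ Set.Icc (0:ℝ) Rb, r ≠ s →
      0 ≤ (r * vd r - s * vd s) / (v r - v s) ∧
      (r * vd r - s * vd s) / (v r - v s) ≤ K)
    (ρ : ℝ → ℝ → ℝ)
    (hmeas : Measurable (Function.uncurry ρ))
    (hrange : ∀ y t : ℝ, ρ y t ∈ Set.Icc 0 Rb)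
    -- the v-condition
    (hpt : ∀ z : ℝ, 0 < z → ∀ᵐ p : ℝ × ℝ, 0 < p.2 →
      v (ρ (p.1 + z) p.2) - v (ρ p.1 p.2) ≤ z / p.2) :
    -- pointwise extended entropy condition
    (∀ z : ℝ, 0 < z → ∀ᵐ p : ℝ × ℝ, 0 < p.2 →
      (v (ρ (p.1 + z) p.2) + ρ (p.1 + z) p.2 * vd (ρ (p.1 + z) p.2)) -
        (v (ρ p.1 p.2) + ρ p.1 p.2 * vd (ρ p.1 p.2)) ≤ (1 + K) * z / p.2) ∧
    -- distributional extended entropy condition with C = 1 + K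
    (∀ ψ : ℝ → ℝ → ℝ, ContDiff ℝ (⊤ : ℕ∞) (Function.uncurry ψ) →
      HasCompactSupport (Function.uncurry ψ) →
      tsupport (Function.uncurry ψ) ⊆ Set.univ ×ˢ Set.Ioi 0 →
      (∀ y t : ℝ, 0 ≤ ψ y t) →
      -(1 + K) * (∫ t in Set.Ioi (0:ℝ), ∫ y : ℝ, ψ y t) ≤
        ∫ t in Set.Ioi (0:ℝ), ∫ y : ℝ,
          t * (v (ρ y t) + ρ y t * vd (ρ y t)) * deriv (fun z => ψ z t) y) := by
  have hCpos : (0:ℝ) < 1 + K := by linarith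
  set F : ℝ × ℝ → ℝ := fun p => v (ρ p.1 p.2) + ρ p.1 p.2 * vd (ρ p.1 p.2) with hF
  -- the pointwise extended entropy condition, phrased with F
  have hEE : ∀ z : ℝ, 0 < z → ∀ᵐ p : ℝ × ℝ, 0 < p.2 →
      F (p.1 + z, p.2) - F p ≤ (1 + K) * z / p.2 := by
    intro z hz
    filter_upwards [hpt z hz] with p hp hpos
    have hv := hp hpos
    set a := ρ p.1 p.2 with ha'
    set b := ρ (p.1 + z) p.2 with hb'
    have ha := hrange p.1 p.2
    have hb := hrange (p.1 + z) p.2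
    have hzt : 0 < z / p.2 := div_pos hz hpos
    have hgoal : F (p.1 + z, p.2) - F p = (v b - v a) + (b * vd b - a * vd a) := by
      simp only [hF, ha', hb']; ring_nf
    by_cases hab : b = a
    · rw [hgoal, hab]
      have : (0:ℝ) < (1 + K) * z / p.2 := div_pos (mul_pos hCpos hz) hpos
      simpa using this.le
    · have hne : v b ≠ v a := fun h => hab (hanti.injOn hb ha h)
      obtain ⟨h0, hKle⟩ := hv2 b hb a ha hab
      have key : b * vd b - a * vd a = ((b * vd b - a * vd a) / (v b - v a)) * (v b - v a) :=
        (div_mul_cancel₀ _ (sub_ne_zero.mpr hne)).symm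
      rw [hgoal]
      have hCzt : (1 + K) * z / p.2 = z / p.2 + K * (z / p.2) := by ring
      rw [hCzt]
      rcases le_or_gt (v b - v a) 0 with hle | hltp
      · have hφ : b * vd b - a * vd a ≤ 0 := by
          rw [key]; exact mul_nonpos_of_nonneg_of_nonpos h0 hle
        have hKz : 0 ≤ K * (z / p.2) := mul_nonneg hK hzt.le
        linarith
      · have hφ : b * vd b - a * vd a ≤ K * (v b - v a) := by
          rw [key]; exact mul_le_mul_of_nonneg_right hKle hltp.le
        have hKz : K * (v b - v a) ≤ K * (z / p.2) := mul_le_mul_of_nonneg_left hv hK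
        linarith
  refine ⟨fun z hz => hEE z hz, ?_⟩
  -- measurability and boundedness of F
  have hvcont : ContinuousOn v (Set.Icc 0 Rb) := fun r hr => (hv1 r hr).continuousWithinAt
  have hwcont : ContinuousOn (fun r => v r + r * vd r) (Set.Icc 0 Rb) :=
    hvcont.add (continuousOn_id.mul hv1c)
  have hρm : Measurable fun p : ℝ × ℝ => ρ p.1 p.2 := hmeas
  have hFm : Measurable F := by
    have hsub : Measurable fun p : ℝ × ℝ => (⟨ρ p.1 p.2, hrange p.1 p.2⟩ : Set.Icc (0:ℝ) Rb) :=
      hρm.subtype_mk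
    have hres : Continuous ((Set.Icc (0:ℝ) Rb).restrict fun r => v r + r * vd r) :=
      continuousOn_iff_continuous_restrict.mp hwcont
    exact hres.measurable.comp hsub
  obtain ⟨M₀, hM₀⟩ := isCompact_Icc.exists_bound_of_continuousOn hwcont
  set M := max M₀ 0 with hM
  have hMnn : (0:ℝ) ≤ M := le_max_right _ _
  have hFb : ∀ p : ℝ × ℝ, |F p| ≤ M := by
    intro p
    have h1 : |F p| ≤ M₀ := by
      simpa [hF, Real.norm_eq_abs] using hM₀ _ (hrange p.1 p.2)
    exact h1.trans (le_max_left _ _)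
  -- translation invariance of the planar integral
  have htrans : ∀ (w : ℝ) (g : ℝ × ℝ → ℝ),
      (∫ p : ℝ × ℝ, g (p.1 + w, p.2)) = ∫ p : ℝ × ℝ, g p := by
    intro w g
    have hmp : MeasurePreserving (fun p : ℝ × ℝ => (p.1 + w, p.2)) volume volume := by
      rw [Measure.volume_eq_prod]
      exact (measurePreserving_add_right (volume : Measure ℝ) w).prod (MeasurePreserving.id _)
    have hemb : MeasurableEmbedding (fun p : ℝ × ℝ => (p.1 + w, p.2)) :=
      ((MeasurableEquiv.addRight w).prodCongr (MeasurableEquiv.refl ℝ)).measurableEmbedding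
    exact hmp.integral_comp hemb g
  intro ψ hcd hcs hsupp hψnn
  set Φ := Function.uncurry ψ with hΦ
  have hΦc : Continuous Φ := hcd.continuous
  have hψ0 : ∀ y t : ℝ, t ≤ 0 → ψ y t = 0 := by
    intro y t ht
    have h1 : (y, t) ∉ tsupport Φ := fun hmem => absurd (hsupp hmem).2 (by simpa using ht)
    show Φ (y, t) = 0
    exact image_eq_zero_of_notMem_tsupport h1
  -- the partial derivative in the first variable
  have hder : ∀ p : ℝ × ℝ, HasDerivAt (fun x => ψ x p.2) (fderiv ℝ Φ p (1, 0)) p.1 := by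
    intro p
    have h1 : HasDerivAt (fun x : ℝ => (x, p.2)) ((1:ℝ), (0:ℝ)) p.1 :=
      (hasDerivAt_id p.1).prodMk (hasDerivAt_const p.1 p.2)
    have h2 : HasFDerivAt Φ (fderiv ℝ Φ (p.1, p.2)) (p.1, p.2) :=
      (hcd.differentiable (by simp) (p.1, p.2)).hasFDerivAt
    exact h2.comp_hasDerivAt p.1 h1
  set D : ℝ × ℝ → ℝ := fun p => deriv (fun x => ψ x p.2) p.1 with hD
  have hDeq : ∀ p, D p = fderiv ℝ Φ p (1, 0) := fun p => (hder p).deriv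
  have hDc : Continuous D := by
    have h1 : Continuous fun p : ℝ × ℝ => fderiv ℝ Φ p (1, 0) :=
      (hcd.continuous_fderiv (by simp)).clm_apply continuous_const
    rw [show D = fun p : ℝ × ℝ => fderiv ℝ Φ p (1, 0) from funext hDeq]
    exact h1
  have hD0 : ∀ p : ℝ × ℝ, p ∉ tsupport Φ → D p = 0 := by
    intro p hp
    have h0 : Φ =ᶠ[𝓝 p] 0 := notMem_tsupport_iff_eventuallyEq.mp hp
    have h1 : Tendsto (fun x : ℝ => (x, p.2)) (𝓝 p.1) (𝓝 p) := by
      have h2 := (continuous_id.prodMk (continuous_const (y := p.2))).tendsto p.1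
      simpa using h2
    have h2 : (fun x => ψ x p.2) =ᶠ[𝓝 p.1] (fun _ => (0:ℝ)) := h0.comp_tendsto h1
    show deriv (fun x => ψ x p.2) p.1 = 0
    rw [h2.deriv_eq]
    exact deriv_const _ _
  have hDsupp : HasCompactSupport D := HasCompactSupport.intro hcs hD0
  obtain ⟨pL, hpL⟩ := (continuous_abs.comp hDc).exists_forall_ge_of_hasCompactSupport
    (hDsupp.comp_left (g := abs) abs_zero)
  set L := |D pL| with hL
  have hLnn : (0:ℝ) ≤ L := abs_nonneg _
  have hDbd : ∀ p, |D p| ≤ L := fun p => hpL p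
  have hlip : ∀ (t x y : ℝ), |ψ y t - ψ x t| ≤ L * |y - x| := by
    intro t x y
    have h1 := Convex.norm_image_sub_le_of_norm_deriv_le (f := fun x => ψ x t) (s := Set.univ)
      (fun w _ => (hder (w, t)).differentiableAt)
      (fun w _ => by
        have h2 := hDbd (w, t)
        simpa [Real.norm_eq_abs] using h2)
      convex_univ (Set.mem_univ x) (Set.mem_univ y)
    simpa [Real.norm_eq_abs] using h1
  -- bound for ψ
  obtain ⟨pB, hpB⟩ := (continuous_abs.comp hΦc).exists_forall_ge_of_hasCompactSupport
    (hcs.comp_left (g := abs) abs_zero)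
  set B := |Φ pB| with hB
  have hBnn : (0:ℝ) ≤ B := abs_nonneg _
  have hΦbd : ∀ p, |Φ p| ≤ B := fun p => hpB p
  -- the enlarged compact set E
  set E : Set (ℝ × ℝ) :=
    (fun qw : (ℝ × ℝ) × ℝ => (qw.1.1 - qw.2, qw.1.2)) '' ((tsupport Φ) ×ˢ Set.Icc (0:ℝ) 1)
    with hEdef
  have hEcomp : IsCompact E :=
    (hcs.prod isCompact_Icc).image
      ((continuous_fst.fst.sub continuous_snd).prodMk continuous_fst.snd)
  have hEmem : ∀ (p : ℝ × ℝ) (w : ℝ), w ∈ Set.Icc (0:ℝ) 1 →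
      (p.1 + w, p.2) ∈ tsupport Φ → p ∈ E := by
    intro p w hw hmem
    exact ⟨((p.1 + w, p.2), w), ⟨hmem, hw⟩, by simp⟩
  have hsubE : tsupport Φ ⊆ E := by
    intro p hp
    exact hEmem p 0 ⟨le_rfl, zero_le_one⟩ (by simpa using hp)
  obtain ⟨T₀, hT₀⟩ := hEcomp.exists_bound_of_continuousOn (continuous_snd.continuousOn)
  set T := max T₀ 0 with hT
  have hTnn : (0:ℝ) ≤ T := le_max_right _ _
  have hTE : ∀ p ∈ E, |p.2| ≤ T := by
    intro p hp
    have h1 : |p.2| ≤ T₀ := by simpa [Real.norm_eq_abs] using hT₀ p hp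
    exact h1.trans (le_max_left _ _)
  -- basic integrability
  have hΦint : Integrable Φ := hΦc.integrable_of_hasCompactSupport hcs
  have hΦnn : ∀ p : ℝ × ℝ, 0 ≤ Φ p := fun p => hψnn p.1 p.2
  set G : ℝ × ℝ → ℝ := fun p => p.2 * F p * D p with hG
  have hGm : AEStronglyMeasurable G volume :=
    ((measurable_snd.mul hFm).mul hDc.measurable).aestronglyMeasurable
  have hG0 : ∀ p, p ∉ E → G p = 0 := by
    intro p hp
    have h1 : p ∉ tsupport Φ := fun h => hp (hsubE h)
    show p.2 * F p * D p = 0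
    rw [hD0 p h1, mul_zero]
  have hGb : ∀ p, |G p| ≤ T * M * L := by
    intro p
    by_cases hp : p ∈ E
    · have h1 : |G p| = |p.2| * |F p| * |D p| := by
        show |p.2 * F p * D p| = _
        rw [abs_mul, abs_mul]
      rw [h1]
      exact mul_le_mul (mul_le_mul (hTE p hp) (hFb p) (abs_nonneg _) hTnn) (hDbd p)
        (abs_nonneg _) (mul_nonneg hTnn hMnn)
    · rw [hG0 p hp, abs_zero]
      positivity
  have hGint : Integrable G := integrable_of_bound' hEcomp hGm hG0 hGb
  -- the difference quotients
  set u : ℕ → ℝ := fun n => 1 / ((n:ℝ) + 1) with hu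
  have hupos : ∀ n, 0 < u n := fun n => by positivity
  have hule : ∀ n, u n ≤ 1 := fun n => by
    rw [hu]
    rw [div_le_one (by positivity)]
    simpa using le_add_of_nonneg_left (n.cast_nonneg (α := ℝ))
  set Hn : ℕ → ℝ × ℝ → ℝ :=
    fun n p => p.2 * F p * ((ψ (p.1 + u n) p.2 - ψ p.1 p.2) / u n) with hHn
  have hmeasn : ∀ n, AEStronglyMeasurable (Hn n) (volume : Measure (ℝ × ℝ)) := by
    intro n
    have hc1 : Continuous fun p : ℝ × ℝ => ψ (p.1 + u n) p.2 :=
      hΦc.comp ((continuous_fst.add continuous_const).prodMk continuous_snd)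
    have hc2 : Continuous fun p : ℝ × ℝ => ψ p.1 p.2 := hΦc
    exact ((measurable_snd.mul hFm).mul
      (((hc1.sub hc2).measurable).div_const _)).aestronglyMeasurable
  have hbint : Integrable (E.indicator fun _ => T * M * L) := by
    rw [integrable_indicator_iff hEcomp.isClosed.measurableSet]
    exact integrableOn_const hEcomp.measure_lt_top.ne
  have hbound : ∀ n, ∀ᵐ p : ℝ × ℝ, ‖Hn n p‖ ≤ E.indicator (fun _ => T * M * L) p := by
    intro n
    refine Eventually.of_forall fun p => ?_
    by_cases hp : p ∈ E
    · have hd1 : |ψ (p.1 + u n) p.2 - ψ p.1 p.2| ≤ L * u n := by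
        have h2 := hlip p.2 p.1 (p.1 + u n)
        simpa [abs_of_pos (hupos n)] using h2
      have hd2 : |(ψ (p.1 + u n) p.2 - ψ p.1 p.2) / u n| ≤ L := by
        rw [abs_div, abs_of_pos (hupos n), div_le_iff₀ (hupos n)]
        linarith
      have h1 : ‖Hn n p‖ = |p.2| * |F p| * |(ψ (p.1 + u n) p.2 - ψ p.1 p.2) / u n| := by
        show |p.2 * F p * ((ψ (p.1 + u n) p.2 - ψ p.1 p.2) / u n)| = _
        rw [abs_mul, abs_mul]
      rw [h1, Set.indicator_of_mem hp]
      exact mul_le_mul (mul_le_mul (hTE p hp) (hFb p) (abs_nonneg _) hTnn) hd2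
        (abs_nonneg _) (mul_nonneg hTnn hMnn)
    · have k1 : ∀ w ∈ Set.Icc (0:ℝ) 1, ψ (p.1 + w) p.2 = 0 := by
        intro w hw
        by_contra hne
        exact hp (hEmem p w hw (subset_tsupport _ hne))
      have k2 : ψ p.1 p.2 = 0 := by simpa using k1 0 ⟨le_rfl, zero_le_one⟩
      have k3 : ψ (p.1 + u n) p.2 = 0 := k1 (u n) ⟨(hupos n).le, hule n⟩
      have h1 : Hn n p = 0 := by
        show p.2 * F p * ((ψ (p.1 + u n) p.2 - ψ p.1 p.2) / u n) = 0
        rw [k2, k3]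
        simp
      rw [h1, Set.indicator_of_notMem hp]
      simp
  -- lower bound for each difference quotient integral
  have hlow : ∀ n, -(1 + K) * ∫ p : ℝ × ℝ, Φ p ≤ ∫ p : ℝ × ℝ, Hn n p := by
    intro n
    have hz0 : 0 < u n := hupos n
    have hmp' : MeasurePreserving (fun p : ℝ × ℝ => (p.1 + -(u n), p.2)) volume volume := by
      rw [Measure.volume_eq_prod]
      exact (measurePreserving_add_right (volume : Measure ℝ) (-(u n))).prod
        (MeasurePreserving.id _)
    have hae' : ∀ᵐ p : ℝ × ℝ, 0 < p.2 →
        F p - F (p.1 + -(u n), p.2) ≤ (1 + K) * u n / p.2 := by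
      have h1 := hmp'.quasiMeasurePreserving.tendsto_ae.eventually (hEE (u n) hz0)
      filter_upwards [h1] with p hp hpos
      have h2 := hp hpos
      simpa using h2
    set W : ℝ × ℝ → ℝ := fun p => p.2 * (F (p.1 + -(u n), p.2) - F p) * Φ p with hW
    have hWlb : ∀ᵐ p : ℝ × ℝ, -((1 + K) * u n) * Φ p ≤ W p := by
      filter_upwards [hae'] with p hp
      rcases le_or_gt p.2 0 with ht | ht
      · have h0 : Φ p = 0 := hψ0 p.1 p.2 ht
        show -((1 + K) * u n) * Φ p ≤ p.2 * (F (p.1 + -(u n), p.2) - F p) * Φ p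
        rw [h0]
        simp
      · have h1 := hp ht
        have h3 : 0 ≤ Φ p := hΦnn p
        have h4 : -((1 + K) * u n / p.2) * Φ p ≤ (F (p.1 + -(u n), p.2) - F p) * Φ p :=
          mul_le_mul_of_nonneg_right (by linarith) h3
        have h5 := mul_le_mul_of_nonneg_left h4 ht.le
        have h6 : p.2 * (-((1 + K) * u n / p.2) * Φ p) = -((1 + K) * u n) * Φ p := by
          field_simp
        show -((1 + K) * u n) * Φ p ≤ p.2 * (F (p.1 + -(u n), p.2) - F p) * Φ p
        calc -((1 + K) * u n) * Φ p = p.2 * (-((1 + K) * u n / p.2) * Φ p) := h6.symm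
          _ ≤ p.2 * ((F (p.1 + -(u n), p.2) - F p) * Φ p) := h5
          _ = p.2 * (F (p.1 + -(u n), p.2) - F p) * Φ p := (mul_assoc _ _ _).symm
    -- integrability of the pieces
    have hFzm : Measurable fun p : ℝ × ℝ => F (p.1 + -(u n), p.2) :=
      hFm.comp ((measurable_fst.add_const _).prodMk measurable_snd)
    have htsm : MeasurableSet (tsupport Φ) := (isClosed_tsupport Φ).measurableSet
    have hH2int : Integrable (fun p : ℝ × ℝ => p.2 * F p * Φ p) := by
      refine integrable_of_bound' hcs
        (((measurable_snd.mul hFm).mul hΦc.measurable).aestronglyMeasurable)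
        (fun p hp => ?_) (c := T * M * B) (fun p => ?_)
      · simp [image_eq_zero_of_notMem_tsupport hp]
      · by_cases hp : p ∈ tsupport Φ
        · have h1 : |p.2 * F p * Φ p| = |p.2| * |F p| * |Φ p| := by rw [abs_mul, abs_mul]
          rw [h1]
          exact mul_le_mul (mul_le_mul (hTE p (hsubE hp)) (hFb p) (abs_nonneg _) hTnn)
            (hΦbd p) (abs_nonneg _) (mul_nonneg hTnn hMnn)
        · rw [image_eq_zero_of_notMem_tsupport hp]
          simp
          positivity
    have hG1int : Integrable (fun p : ℝ × ℝ => p.2 * F (p.1 + -(u n), p.2) * Φ p) := by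
      refine integrable_of_bound' hcs
        (((measurable_snd.mul hFzm).mul hΦc.measurable).aestronglyMeasurable)
        (fun p hp => ?_) (c := T * M * B) (fun p => ?_)
      · simp [image_eq_zero_of_notMem_tsupport hp]
      · by_cases hp : p ∈ tsupport Φ
        · have h1 : |p.2 * F (p.1 + -(u n), p.2) * Φ p|
              = |p.2| * |F (p.1 + -(u n), p.2)| * |Φ p| := by rw [abs_mul, abs_mul]
          rw [h1]
          exact mul_le_mul (mul_le_mul (hTE p (hsubE hp)) (hFb _) (abs_nonneg _) hTnn)
            (hΦbd p) (abs_nonneg _) (mul_nonneg hTnn hMnn)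
        · rw [image_eq_zero_of_notMem_tsupport hp]
          simp
          positivity
    have hH1int : Integrable (fun p : ℝ × ℝ => p.2 * F p * ψ (p.1 + u n) p.2) := by
      have hc1 : Continuous fun p : ℝ × ℝ => ψ (p.1 + u n) p.2 :=
        hΦc.comp ((continuous_fst.add continuous_const).prodMk continuous_snd)
      refine integrable_of_bound' hEcomp
        (((measurable_snd.mul hFm).mul hc1.measurable).aestronglyMeasurable)
        (fun p hp => ?_) (c := T * M * B) (fun p => ?_)
      · have k3 : ψ (p.1 + u n) p.2 = 0 := by
          by_contra hne
          exact hp (hEmem p (u n) ⟨(hupos n).le, hule n⟩ (subset_tsupport _ hne))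
        rw [k3, mul_zero]
      · by_cases hp : p ∈ E
        · have h1 : |p.2 * F p * ψ (p.1 + u n) p.2|
              = |p.2| * |F p| * |ψ (p.1 + u n) p.2| := by rw [abs_mul, abs_mul]
          rw [h1]
          exact mul_le_mul (mul_le_mul (hTE p hp) (hFb p) (abs_nonneg _) hTnn)
            (hΦbd (p.1 + u n, p.2)) (abs_nonneg _) (mul_nonneg hTnn hMnn)
        · have k3 : ψ (p.1 + u n) p.2 = 0 := by
            by_contra hne
            exact hp (hEmem p (u n) ⟨(hupos n).le, hule n⟩ (subset_tsupport _ hne))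
          rw [k3, mul_zero, abs_zero]
          positivity
    have hWint : Integrable W := by
      refine (hG1int.sub hH2int).congr (Eventually.of_forall fun p => ?_)
      show p.2 * F (p.1 + -(u n), p.2) * Φ p - p.2 * F p * Φ p = W p
      show _ = p.2 * (F (p.1 + -(u n), p.2) - F p) * Φ p
      ring
    -- the key identity
    have hkey : (∫ p : ℝ × ℝ, Hn n p) = (u n)⁻¹ * ∫ p : ℝ × ℝ, W p := by
      have h1 : (fun p : ℝ × ℝ => Hn n p)
          = fun p => (u n)⁻¹ * (p.2 * F p * ψ (p.1 + u n) p.2 - p.2 * F p * Φ p) := by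
        funext p
        show p.2 * F p * ((ψ (p.1 + u n) p.2 - Φ p) / u n) = _
        field_simp
      rw [h1, integral_const_mul _ _, integral_sub hH1int hH2int]
      have h2 : (∫ p : ℝ × ℝ, p.2 * F p * ψ (p.1 + u n) p.2)
          = ∫ p : ℝ × ℝ, p.2 * F (p.1 + -(u n), p.2) * Φ p := by
        have h3 := htrans (u n) (fun p : ℝ × ℝ => p.2 * F (p.1 + -(u n), p.2) * Φ p)
        rw [← h3]
        refine integral_congr_ae (Eventually.of_forall fun p => ?_)
        show p.2 * F p * ψ (p.1 + u n) p.2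
            = (p.1 + u n, p.2).2 * F ((p.1 + u n, p.2).1 + -(u n), (p.1 + u n, p.2).2)
              * Φ (p.1 + u n, p.2)
        show p.2 * F p * ψ (p.1 + u n) p.2
            = p.2 * F (p.1 + u n + -(u n), p.2) * ψ (p.1 + u n) p.2
        rw [add_neg_cancel_right]
      rw [h2, ← integral_sub hG1int hH2int]
      congr 1
      refine integral_congr_ae (Eventually.of_forall fun p => ?_)
      show p.2 * F (p.1 + -(u n), p.2) * Φ p - p.2 * F p * Φ p = W p
      show _ = p.2 * (F (p.1 + -(u n), p.2) - F p) * Φ p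
      ring
    have hWge : -((1 + K) * u n) * ∫ p : ℝ × ℝ, Φ p ≤ ∫ p : ℝ × ℝ, W p := by
      rw [← integral_const_mul _ _]
      exact integral_mono_ae (hΦint.const_mul _) hWint hWlb
    rw [hkey]
    have heq : -(1 + K) * ∫ p : ℝ × ℝ, Φ p
        = (u n)⁻¹ * (-((1 + K) * u n) * ∫ p : ℝ × ℝ, Φ p) := by
      field_simp
    rw [heq]
    exact mul_le_mul_of_nonneg_left hWge (inv_nonneg.mpr hz0.le)
  -- convergence of the difference quotient integrals
  have hconv : Tendsto (fun n => ∫ p : ℝ × ℝ, Hn n p) atTop (𝓝 (∫ p : ℝ × ℝ, G p)) := by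
    refine tendsto_integral_of_dominated_convergence (E.indicator fun _ => T * M * L)
      hmeasn hbint hbound ?_
    refine Eventually.of_forall fun p => ?_
    have hd : HasDerivAt (fun x => ψ x p.2) (D p) p.1 := by
      have h1 := hder p
      rwa [← hDeq p] at h1
    have hsl := hasDerivAt_iff_tendsto_slope.mp hd
    have hseq : Tendsto (fun n : ℕ => p.1 + u n) atTop (𝓝[≠] p.1) := by
      refine tendsto_nhdsWithin_of_tendsto_nhds_of_eventually_within _ ?_ ?_
      · have h0 : Tendsto u atTop (𝓝 0) := tendsto_one_div_add_atTop_nhds_zero_nat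
        simpa using tendsto_const_nhds.add h0
      · refine Eventually.of_forall fun n => ?_
        have h1 := hupos n
        simp only [Set.mem_compl_iff, Set.mem_singleton_iff]
        intro h2
        nlinarith
    have hcomp := hsl.comp hseq
    have hq : Tendsto (fun n => (ψ (p.1 + u n) p.2 - ψ p.1 p.2) / u n) atTop (𝓝 (D p)) := by
      refine hcomp.congr fun n => ?_
      show slope (fun x => ψ x p.2) p.1 (p.1 + u n) = _
      rw [slope_def_field, add_sub_cancel_left]
    have h2 := hq.const_mul (p.2 * F p)
    simpa only [hHn, hG, mul_comm] using h2
  -- conclusion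
  have hfinal : -(1 + K) * ∫ p : ℝ × ℝ, Φ p ≤ ∫ p : ℝ × ℝ, G p :=
    ge_of_tendsto' hconv hlow
  have e1 : (∫ t in Set.Ioi (0:ℝ), ∫ y : ℝ, ψ y t) = ∫ p : ℝ × ℝ, Φ p :=
    iter_eq' hΦint (fun p hp => hψ0 p.1 p.2 hp)
  have h0G : ∀ p : ℝ × ℝ, p.2 ≤ 0 → G p = 0 := by
    intro p hp
    have hz : (fun x => ψ x p.2) = fun _ => (0:ℝ) := funext fun x => hψ0 x p.2 hp
    have hD0' : D p = 0 := by
      show deriv (fun x => ψ x p.2) p.1 = 0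
      rw [hz]
      exact deriv_const _ _
    show p.2 * F p * D p = 0
    rw [hD0', mul_zero]
  have e2 : (∫ t in Set.Ioi (0:ℝ), ∫ y : ℝ,
      t * (v (ρ y t) + ρ y t * vd (ρ y t)) * deriv (fun z => ψ z t) y)
      = ∫ p : ℝ × ℝ, G p := iter_eq' (h := G) hGint h0G
  rw [e1, e2]
  exact hfinal
end

section
/- (Sufficient condition for (V2).) Let R̄ > 0 and let v ∈ C²([0,R̄]) be strictly decreasing with v'(ρ) < 0 on [0,R̄]. Set φ(ρ) := ρ·v'(ρ) and assume φ is non-increasing on [0,R̄] and that there exists K̃ ≥ 0 with |ρ·v''(ρ)/v'(ρ)| ≤ K̃ for all ρ ∈ [0,R̄]. Then 0 ≤ (φ(ρ)−φ(σ))/(v(ρ)−v(σ)) ≤ 1 + K̃ for all ρ, σ ∈ [0,R̄] with ρ ≠ σ; that is, assumption (V2) holds with K = 1 + K̃. -/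
/-! The function `g(ρ) = (1 + K̃) v(ρ) - φ(ρ)` has derivative `K̃ v'(ρ) - ρ v''(ρ)`, which is
non-positive because `|ρ v''(ρ)| ≤ K̃ |v'(ρ)| = -K̃ v'(ρ)`. So `g` is non-increasing, i.e.
`φ(ρ) - φ(σ) ≤ (1 + K̃) (v(ρ) - v(σ))` for `ρ < σ`, where `v(ρ) - v(σ) > 0` and, as `φ` is
non-increasing, `φ(ρ) - φ(σ) ≥ 0`. -/

lemma mul_le_of_abs_div_le_of_neg {a b K : ℝ} (hb : b < 0) (h : |a / b| ≤ K) : K * b ≤ a := by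
  rw [abs_div, abs_of_neg hb, div_le_iff₀ (neg_pos.mpr hb)] at h
  linarith [neg_abs_le a]

lemma antitoneOn_add_one_mul_sub_mul_deriv {D : Set ℝ} (hD : Convex ℝ D) {v vd vdd : ℝ → ℝ}
    {K : ℝ} (hv : ∀ x ∈ D, HasDerivWithinAt v (vd x) D x)
    (hvd : ∀ x ∈ D, HasDerivWithinAt vd (vdd x) D x)
    (hK : ∀ x ∈ interior D, K * vd x ≤ x * vdd x) :
    AntitoneOn (fun x => (1 + K) * v x - x * vd x) D := by
  have hderiv : ∀ x ∈ D, HasDerivWithinAt (fun x => (1 + K) * v x - x * vd x)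
      ((1 + K) * vd x - (1 * vd x + x * vdd x)) D x := fun x hx =>
    ((hv x hx).const_mul (1 + K)).sub ((hasDerivWithinAt_id x D).mul (hvd x hx))
  refine antitoneOn_of_hasDerivWithinAt_nonpos hD
    (fun x hx => (hderiv x hx).continuousWithinAt)
    (fun x hx => (hderiv x (interior_subset hx)).mono interior_subset) fun x hx => ?_
  linarith [hK x hx]

lemma div_sub_mem_Icc_of_antitoneOn {α : Type*} [LinearOrder α] {s : Set α} {v φ : α → ℝ}
    {K : ℝ} (hv : StrictAntiOn v s) (hφ : AntitoneOn φ s)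
    (hg : AntitoneOn (fun x => K * v x - φ x) s) {r t : α} (hr : r ∈ s) (ht : t ∈ s)
    (hne : r ≠ t) :
    0 ≤ (φ r - φ t) / (v r - v t) ∧ (φ r - φ t) / (v r - v t) ≤ K := by
  wlog hrt : r < t generalizing r t
  · rw [← neg_div_neg_eq, neg_sub, neg_sub]
    exact this ht hr hne.symm (hne.lt_or_gt.resolve_left hrt)
  have hden : 0 < v r - v t := sub_pos.mpr (hv hr ht hrt)
  have hnum : 0 ≤ φ r - φ t := sub_nonneg.mpr (hφ hr ht hrt.le)
  have hgrt : K * v t - φ t ≤ K * v r - φ r := hg hr ht hrt.le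
  refine ⟨div_nonneg hnum hden.le, (div_le_iff₀ hden).mpr ?_⟩
  linarith

theorem sufficient_condition_for_V2_general
    (Rb : ℝ) (v vd vdd : ℝ → ℝ)
    -- v ∈ C²([0,R̄]) with first derivative vd and second derivative vdd
    (hv1 : ∀ r ∈ Set.Icc (0:ℝ) Rb, HasDerivWithinAt v (vd r) (Set.Icc 0 Rb) r)
    (hv2 : ∀ r ∈ Set.Icc (0:ℝ) Rb, HasDerivWithinAt vd (vdd r) (Set.Icc 0 Rb) r)
    -- v strictly decreasing with v' < 0
    (hanti : StrictAntiOn v (Set.Icc 0 Rb))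
    (hneg : ∀ r ∈ Set.Icc (0:ℝ) Rb, vd r < 0)
    -- φ(r) = r v'(r) non-increasing
    (hphi : AntitoneOn (fun r => r * vd r) (Set.Icc 0 Rb))
    -- |r v''(r)/v'(r)| ≤ K̃
    (Kt : ℝ)
    (hbound : ∀ r ∈ Set.Icc (0:ℝ) Rb, |r * vdd r / vd r| ≤ Kt) :
    ∀ r ∈ Set.Icc (0:ℝ) Rb, ∀ s ∈ Set.Icc (0:ℝ) Rb, r ≠ s →
      0 ≤ (r * vd r - s * vd s) / (v r - v s) ∧
      (r * vd r - s * vd s) / (v r - v s) ≤ 1 + Kt := by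
  intro r hr s hs hne
  have hg := antitoneOn_add_one_mul_sub_mul_deriv (convex_Icc 0 Rb) hv1 hv2 fun x hx =>
    mul_le_of_abs_div_le_of_neg (hneg x (interior_subset hx)) (hbound x (interior_subset hx))
  exact div_sub_mem_Icc_of_antitoneOn hanti hphi hg hr hs hne

/-- **Sufficient condition for (V2)** (Remark 2.3 of the paper).  If `v ∈ C²([0,R̄])` is
strictly decreasing with `v' < 0`, `φ(r) = r v'(r)` is non-increasing, and
`|r v''(r) / v'(r)| ≤ K̃` on `[0,R̄]`, then assumption (V2) holds with `K = 1 + K̃`: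
`0 ≤ (φ(ρ)-φ(σ))/(v(ρ)-v(σ)) ≤ 1 + K̃` for all distinct `ρ, σ ∈ [0,R̄]`. -/
theorem sufficient_condition_for_V2
    (Rb : ℝ) (hRb : 0 < Rb) (v vd vdd : ℝ → ℝ)
    -- v ∈ C²([0,R̄]) with first derivative vd and second derivative vdd
    (hv1 : ∀ r ∈ Set.Icc (0:ℝ) Rb, HasDerivWithinAt v (vd r) (Set.Icc 0 Rb) r)
    (hv2 : ∀ r ∈ Set.Icc (0:ℝ) Rb, HasDerivWithinAt vd (vdd r) (Set.Icc 0 Rb) r)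
    (hvddc : ContinuousOn vdd (Set.Icc 0 Rb))
    -- v strictly decreasing with v' < 0
    (hanti : StrictAntiOn v (Set.Icc 0 Rb))
    (hneg : ∀ r ∈ Set.Icc (0:ℝ) Rb, vd r < 0)
    -- φ(r) = r v'(r) non-increasing
    (hphi : AntitoneOn (fun r => r * vd r) (Set.Icc 0 Rb))
    -- |r v''(r)/v'(r)| ≤ K̃
    (Kt : ℝ) (hKt : 0 ≤ Kt)
    (hbound : ∀ r ∈ Set.Icc (0:ℝ) Rb, |r * vdd r / vd r| ≤ Kt) :
    ∀ r ∈ Set.Icc (0:ℝ) Rb, ∀ s ∈ Set.Icc (0:ℝ) Rb, r ≠ s →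
      0 ≤ (r * vd r - s * vd s) / (v r - v s) ∧
      (r * vd r - s * vd s) / (v r - v s) ≤ 1 + Kt :=
  sufficient_condition_for_V2_general Rb v vd vdd hv1 hv2 hanti hneg hphi Kt hbound
end

section
/- (Gagliardo–Nirenberg type interpolation for BV functions.) There exists a universal constant C ≥ 0 such that for every g ∈ BV(ℝ) ∩ L¹(ℝ), setting G(x) := ∫_{−∞}^{x} g(y) dy, one has ‖g‖_{L¹(ℝ)} ≤ C·TV[g]^{1/2}·‖G‖_{L¹(ℝ)}^{1/2}. -/
open MeasureTheory Set Filter Topology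

/-!
On a cell `[a, b]`, `(b - a) g(x) = G(b) - G(a) + ∫_a^b (g(x) - g(y)) dy`, hence
`∫_a^b |g| ≤ |G(a)| + |G(b)| + (b - a) TV_{[a,b]}[g]`. Cut the line at points `u_k` taken from
consecutive cells of length `h`, each a point where `|G|` is at most its mean over its cell.
The cells `[u_k, u_{k+1}]` have length at most `2h`, so summing gives
`‖g‖₁ ≤ 2 (‖G‖₁ / h + h TV[g])` for every `h > 0`, and optimizing in `h` gives the constant 4.
-/

lemma abs_mul_sub_intervalIntegral_le {g : ℝ → ℝ} {a b x : ℝ} (hab : a ≤ b)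
    (hg : IntervalIntegrable g volume a b) (hV : BoundedVariationOn g (Icc a b))
    (hx : x ∈ Icc a b) :
    |(b - a) * g x - ∫ y in a..b, g y| ≤ (b - a) * (eVariationOn g (Icc a b)).toReal := by
  have hdiff : (b - a) * g x - ∫ y in a..b, g y = ∫ y in a..b, (g x - g y) := by
    rw [intervalIntegral.integral_sub intervalIntegrable_const hg, intervalIntegral.integral_const,
      smul_eq_mul]
  have hbound : ∀ y ∈ uIoc a b, ‖g x - g y‖ ≤ (eVariationOn g (Icc a b)).toReal := fun y hy =>
    hV.dist_le hx (Ioc_subset_Icc_self (uIoc_of_le hab ▸ hy))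
  rw [hdiff, ← Real.norm_eq_abs, mul_comm, ← abs_of_nonneg (sub_nonneg.2 hab)]
  exact intervalIntegral.norm_integral_le_of_norm_le_const hbound

lemma intervalIntegral_abs_le_abs_intervalIntegral_add_mul_eVariationOn {g : ℝ → ℝ} {a b : ℝ}
    (hab : a ≤ b) (hg : IntervalIntegrable g volume a b) (hV : BoundedVariationOn g (Icc a b)) :
    ∫ x in a..b, |g x| ≤ |∫ x in a..b, g x| + (b - a) * (eVariationOn g (Icc a b)).toReal := by
  rcases hab.eq_or_lt with rfl | hlt
  · simp
  set D := ∫ x in a..b, g x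
  set V := (eVariationOn g (Icc a b)).toReal
  have hpoint : ∀ x ∈ Icc a b, |g x| ≤ (|D| + (b - a) * V) / (b - a) := fun x hx => by
    rw [le_div_iff₀ (sub_pos.2 hlt), mul_comm, ← abs_of_pos (sub_pos.2 hlt), ← abs_mul,
      abs_of_pos (sub_pos.2 hlt)]
    have := abs_mul_sub_intervalIntegral_le hab hg hV hx
    have := abs_sub_abs_le_abs_sub ((b - a) * g x) D
    linarith
  calc ∫ x in a..b, |g x| ≤ ∫ _ in a..b, (|D| + (b - a) * V) / (b - a) :=
        intervalIntegral.integral_mono_on hab hg.abs intervalIntegrable_const hpoint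
    _ = |D| + (b - a) * V := by
        rw [intervalIntegral.integral_const, smul_eq_mul]
        field_simp

lemma eVariationOn.sum_Icc_adjacent {α E : Type*} [LinearOrder α] [PseudoEMetricSpace E]
    (f : α → E) {u : ℕ → α} (hu : Monotone u) (n : ℕ) :
    ∑ k ∈ Finset.range n, eVariationOn f (Icc (u k) (u (k + 1))) =
      eVariationOn f (Icc (u 0) (u n)) := by
  induction n with
  | zero => simp
  | succ n ih =>
    rw [Finset.sum_range_succ, ih]
    simpa using eVariationOn.Icc_add_Icc f (hu n.zero_le) (hu n.le_succ) (mem_univ (u n))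

lemma intervalIntegral_abs_le_sum_add_mul_eVariationOn {g : ℝ → ℝ} {u : ℕ → ℝ} {δ : ℝ} {n : ℕ}
    (hu : Monotone u) (hstep : ∀ k, u (k + 1) - u k ≤ δ)
    (hg : IntervalIntegrable g volume (u 0) (u n)) (hV : BoundedVariationOn g (Icc (u 0) (u n))) :
    ∫ x in u 0..u n, |g x| ≤
      ∑ k ∈ Finset.range n, |∫ x in u k..u (k + 1), g x| +
        δ * (eVariationOn g (Icc (u 0) (u n))).toReal := by
  have hsub : ∀ k < n, Icc (u k) (u (k + 1)) ⊆ Icc (u 0) (u n) := fun k hk =>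
    Icc_subset_Icc (hu k.zero_le) (hu hk)
  have hgk : ∀ k < n, IntervalIntegrable g volume (u k) (u (k + 1)) := fun k hk =>
    hg.mono_set (by simpa [uIcc_of_le, hu k.le_succ, hu n.zero_le] using hsub k hk)
  have hVk : ∀ k < n, BoundedVariationOn g (Icc (u k) (u (k + 1))) := fun k hk =>
    hV.mono (hsub k hk)
  have hVsum : ∑ k ∈ Finset.range n, (eVariationOn g (Icc (u k) (u (k + 1)))).toReal =
      (eVariationOn g (Icc (u 0) (u n))).toReal := by
    rw [← eVariationOn.sum_Icc_adjacent g hu n,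
      ENNReal.toReal_sum fun k hk => hVk k (Finset.mem_range.1 hk)]
  calc ∫ x in u 0..u n, |g x| = ∑ k ∈ Finset.range n, ∫ x in u k..u (k + 1), |g x| :=
        (intervalIntegral.sum_integral_adjacent_intervals fun k hk => (hgk k hk).abs).symm
    _ ≤ ∑ k ∈ Finset.range n, (|∫ x in u k..u (k + 1), g x| +
          δ * (eVariationOn g (Icc (u k) (u (k + 1)))).toReal) := by
        refine Finset.sum_le_sum fun k hk => ?_
        have hk := Finset.mem_range.1 hk
        refine (intervalIntegral_abs_le_abs_intervalIntegral_add_mul_eVariationOn (hu k.le_succ)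
          (hgk k hk) (hVk k hk)).trans ?_
        gcongr
        exact hstep k
    _ = _ := by rw [Finset.sum_add_distrib, ← Finset.mul_sum, hVsum]

lemma exists_abs_mul_le_intervalIntegral_abs {F : ℝ → ℝ} {c d : ℝ} (hcd : c < d)
    (hF : IntervalIntegrable F volume c d) :
    ∃ x ∈ Icc c d, |F x| * (d - c) ≤ ∫ t in c..d, |F t| := by
  have hvol : volume (Ioc c d) = ENNReal.ofReal (d - c) := Real.volume_Ioc
  obtain ⟨x, hx, hle⟩ := exists_le_setAverage (by simpa [hvol] using hcd) (by simp [hvol])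
    hF.1.abs
  refine ⟨x, Ioc_subset_Icc_self hx, ?_⟩
  rw [setAverage_eq, measureReal_def, hvol, ENNReal.toReal_ofReal (sub_pos.2 hcd).le,
    smul_eq_mul, ← div_eq_inv_mul, le_div_iff₀ (sub_pos.2 hcd)] at hle
  rwa [intervalIntegral.integral_of_le hcd.le]

lemma exists_grid_sum_abs_mul_le_integral_abs {F : ℝ → ℝ} (hF : Integrable F) {h : ℝ}
    (hh : 0 < h) (c : ℝ) :
    ∃ u : ℕ → ℝ, (∀ k : ℕ, u k ∈ Icc (c + k * h) (c + (k + 1) * h)) ∧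
      ∀ n, ∑ k ∈ Finset.range n, |F (u k)| * h ≤ ∫ x, |F x| := by
  set e : ℕ → ℝ := fun k => c + k * h
  have he : ∀ k, e (k + 1) = c + (k + 1) * h := fun k => by simp [e]
  have hmono : Monotone e := fun k l hkl => by simp only [e]; gcongr
  choose u hu hle using fun k : ℕ =>
    exists_abs_mul_le_intervalIntegral_abs (F := F) (c := e k) (d := e (k + 1))
      (by rw [he]; simp only [e]; linarith) hF.intervalIntegrable
  refine ⟨u, fun k => he k ▸ hu k, fun n => ?_⟩
  calc ∑ k ∈ Finset.range n, |F (u k)| * h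
      ≤ ∑ k ∈ Finset.range n, ∫ x in e k..e (k + 1), |F x| :=
        Finset.sum_le_sum fun k _ => by simpa [he, e, add_mul] using hle k
    _ = ∫ x in e 0..e n, |F x| :=
        intervalIntegral.sum_integral_adjacent_intervals fun k _ => hF.abs.intervalIntegrable
    _ ≤ ∫ x, |F x| := by
        rw [intervalIntegral.integral_of_le (hmono n.zero_le)]
        exact setIntegral_le_integral hF.abs (Eventually.of_forall fun x => abs_nonneg _)

lemma intervalIntegral_abs_le_of_integrable_primitive {g : ℝ → ℝ} (hg : Integrable g)
    (hV : BoundedVariationOn g univ) (hG : Integrable fun x => ∫ y in Iic x, g y)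
    {h : ℝ} (hh : 0 < h) {a b : ℝ} (hab : a ≤ b) :
    ∫ x in a..b, |g x| ≤
      2 * ((∫ x, |∫ y in Iic x, g y|) / h + h * (eVariationOn g univ).toReal) := by
  set G : ℝ → ℝ := fun x => ∫ y in Iic x, g y
  set A := ∫ x, |G x|
  obtain ⟨n, hn⟩ := exists_nat_ge ((b - a) / h)
  obtain ⟨u, hu, hsum⟩ := exists_grid_sum_abs_mul_le_integral_abs hG hh (a - h)
  have hcell : ∀ k : ℕ, a + (k - 1) * h ≤ u k ∧ u k ≤ a + k * h := fun k => by
    constructor <;> linarith [(hu k).1, (hu k).2]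
  have hmono : Monotone u := monotone_nat_of_le_succ fun k => by
    have := (hcell (k + 1)).1; push_cast at this; linarith [(hcell k).2]
  have hstep : ∀ k, u (k + 1) - u k ≤ 2 * h := fun k => by
    have := (hcell (k + 1)).2; push_cast at this; linarith [(hcell k).1]
  have hu0 : u 0 ≤ a := by simpa using (hcell 0).2
  have hun : b ≤ u (n + 1) := by
    have := (hcell (n + 1)).1
    push_cast at this
    linarith [(div_le_iff₀ hh).1 hn]
  have hincr : ∀ k, |∫ x in u k..u (k + 1), g x| ≤ |G (u (k + 1))| + |G (u k)| := fun k => by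
    rw [← intervalIntegral.integral_Iic_sub_Iic hg.integrableOn hg.integrableOn]
    exact abs_sub _ _
  have hGsum : ∑ k ∈ Finset.range (n + 1), (|G (u (k + 1))| + |G (u k)|) ≤ 2 * (A / h) := by
    have hS : ∑ k ∈ Finset.range (n + 2), |G (u k)| ≤ A / h := by
      rw [le_div_iff₀ hh, Finset.sum_mul]
      exact hsum (n + 2)
    have := Finset.sum_range_succ' (fun k => |G (u k)|) (n + 1)
    have := Finset.sum_range_succ (fun k => |G (u k)|) (n + 1)
    rw [Finset.sum_add_distrib]
    linarith [abs_nonneg (G (u 0)), abs_nonneg (G (u (n + 1)))]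
  have hVle : (eVariationOn g (Icc (u 0) (u (n + 1)))).toReal ≤ (eVariationOn g univ).toReal :=
    ENNReal.toReal_mono hV (eVariationOn.mono g (subset_univ _))
  calc ∫ x in a..b, |g x| ≤ ∫ x in u 0..u (n + 1), |g x| :=
        intervalIntegral.integral_mono_interval hu0 hab hun
          (Eventually.of_forall fun x => abs_nonneg _) hg.abs.intervalIntegrable
    _ ≤ ∑ k ∈ Finset.range (n + 1), |∫ x in u k..u (k + 1), g x| +
          2 * h * (eVariationOn g (Icc (u 0) (u (n + 1)))).toReal :=
        intervalIntegral_abs_le_sum_add_mul_eVariationOn hmono hstep hg.intervalIntegrable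
          (hV.mono (subset_univ _))
    _ ≤ 2 * (A / h) + 2 * h * (eVariationOn g univ).toReal := by
        gcongr
        exact (Finset.sum_le_sum fun k _ => hincr k).trans hGsum
    _ = _ := by ring

lemma integral_le_of_forall_intervalIntegral_le {f : ℝ → ℝ} (hf : Integrable f) {K : ℝ}
    (hK : ∀ a b, a ≤ b → ∫ x in a..b, f x ≤ K) : ∫ x, f x ≤ K :=
  le_of_tendsto (intervalIntegral_tendsto_integral hf tendsto_neg_atTop_atBot tendsto_id)
    ((eventually_ge_atTop 0).mono fun x hx => hK _ _ (by simp only [id]; linarith))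

lemma le_two_mul_sqrt_mul_sqrt_of_forall_pos {I a b : ℝ} (ha : 0 ≤ a) (hb : 0 ≤ b)
    (hI : ∀ t > 0, I ≤ a / t + t * b) : I ≤ 2 * √a * √b := by
  set s := √a
  set r := √b
  have hs : 0 ≤ s := Real.sqrt_nonneg a
  have hr : 0 ≤ r := Real.sqrt_nonneg b
  have has : a = s * s := (Real.mul_self_sqrt ha).symm
  have hbr : b = r * r := (Real.mul_self_sqrt hb).symm
  refine le_of_forall_pos_le_add fun ε hε => ?_
  -- `t = s / r` is optimal; perturbing by `η` keeps it positive and finite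
  set η := ε / (s + r + 1)
  have hη : 0 < η := by positivity
  have hηε : η * (s + r) ≤ ε := by
    rw [div_mul_eq_mul_div, div_le_iff₀ (by positivity)]
    nlinarith
  have h1 : a / ((s + η) / (r + η)) ≤ s * (r + η) := by
    rw [div_div_eq_mul_div, div_le_iff₀ (by positivity), has]
    nlinarith [mul_nonneg hs hη.le]
  have h2 : (s + η) / (r + η) * b ≤ (s + η) * r := by
    rw [div_mul_eq_mul_div, div_le_iff₀ (by positivity), hbr]
    nlinarith [mul_nonneg hr hη.le, mul_nonneg hs hr]
  linarith [hI ((s + η) / (r + η)) (by positivity)]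

/-- **Gagliardo–Nirenberg type interpolation for BV functions** (inequality (5.2) of the
paper).  There is a universal constant `C ≥ 0` such that for every
`g ∈ BV(ℝ) ∩ L¹(ℝ)`, with primitive `G(x) = ∫_{-∞}^x g` in `L¹(ℝ)`,
`‖g‖_{L¹} ≤ C · TV[g]^{1/2} · ‖G‖_{L¹}^{1/2}`. -/
theorem gagliardo_nirenberg_bv :
    ∃ C : ℝ, 0 ≤ C ∧
      ∀ g : ℝ → ℝ, MeasureTheory.Integrable g →
        eVariationOn g Set.univ ≠ ⊤ →
        MeasureTheory.Integrable (fun x : ℝ => ∫ y in Set.Iic x, g y) →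
        (∫ x : ℝ, |g x|) ≤
          C * Real.sqrt (eVariationOn g Set.univ).toReal *
            Real.sqrt (∫ x : ℝ, |∫ y in Set.Iic x, g y|) := by
  refine ⟨4, by norm_num, fun g hg hV hG => ?_⟩
  have hscale : ∀ h > 0, (∫ x, |g x|) / 2 ≤
      (∫ x, |∫ y in Iic x, g y|) / h + h * (eVariationOn g univ).toReal := fun h hh => by
    rw [div_le_iff₀' two_pos]
    exact integral_le_of_forall_intervalIntegral_le hg.abs fun a b hab =>
      intervalIntegral_abs_le_of_integrable_primitive hg hV hG hh hab
  have := le_two_mul_sqrt_mul_sqrt_of_forall_pos (integral_nonneg fun x => abs_nonneg _)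
    ENNReal.toReal_nonneg hscale
  linarith [mul_comm √(∫ x, |∫ y in Iic x, g y|) √(eVariationOn g univ).toReal]
end
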